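/- arXiv:2211.01023 — 7 statements merged into one kernel-verified Lean document; each statement's English description precedes it below -/
import Mathlib

section
/- Let γ : [0,∞) → X be an (L,θ)-ray in a proper geodesic metric space X based at 𝔬 (i.e., γ(0) = 𝔬 and (1/L)|s−t| − θ(max(s,t)) ≤ d(γ(s),γ(t)) ≤ L|s−t| + θ(max(s,t)) for all s,t ≥ 0). Then there exist a constant n > 0 and a continuous map γ̂ : [0,∞) → X which is an (L, n·θ)-ray, agrees with γ at every nonnegative integer, and satisfies d(γ(t), γ̂(t)) ≤ n·θ(t) for all t ≥ 0. -/
open Metric Set Filter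

/-- `γ` is an `(L,θ)`-ray based at `o`. -/
def IsRay {X : Type*} [MetricSpace X] (o : X) (L : ℝ) (θ : ℝ → ℝ) (γ : ℝ → X) : Prop :=
  γ 0 = o ∧ ∀ s t : ℝ, 0 ≤ s → 0 ≤ t →
    (1 / L) * |s - t| - θ (max s t) ≤ dist (γ s) (γ t) ∧
    dist (γ s) (γ t) ≤ L * |s - t| + θ (max s t)

/-- `X` is a geodesic metric space: any two points are joined by an isometrically
embedded segment. -/
def IsGeodesicSpace (X : Type*) [MetricSpace X] : Prop :=
  ∀ x y : X, ∃ g : ℝ → X, g 0 = x ∧ g (dist x y) = y ∧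
    ∀ s t : ℝ, s ∈ Set.Icc 0 (dist x y) → t ∈ Set.Icc 0 (dist x y) →
      dist (g s) (g t) = |s - t|

/-!
Join consecutive integer points `γ k`, `γ (k + 1)` of the ray by geodesic segments, traversed at
constant speed `dist (γ k) (γ (k + 1)) ≤ L + θ (k + 1)`. Going through `γ ⌊t⌋`, the completion at
time `t` is within `2 L + 2 θ t + θ 1` of `γ t`: concavity of `θ` gives the subadditivity
`θ (⌊t⌋ + 1) ≤ θ t + θ 1`, and `θ ≥ 1` absorbs the constants into a multiple of `θ t`. A map
uniformly `c θ`-close to an `(L, θ)`-ray is an `(L, (2c + 1) θ)`-ray by the triangle inequality.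
-/

open Topology

section Concave

variable {f : ℝ → ℝ}

lemma ConcaveOn.mul_le_map_mul (hf : ConcaveOn ℝ (Ici 0) f) (hf0 : 0 ≤ f 0) {c x : ℝ}
    (hc₀ : 0 ≤ c) (hc₁ : c ≤ 1) (hx : 0 ≤ x) : c * f x ≤ f (c * x) := by
  have h := hf.2 (mem_Ici.2 hx) (mem_Ici.2 le_rfl) hc₀ (sub_nonneg.2 hc₁) (add_sub_cancel c 1)
  simp only [smul_eq_mul, mul_zero, add_zero] at h
  nlinarith [mul_nonneg (sub_nonneg.2 hc₁) hf0]

lemma ConcaveOn.map_add_le (hf : ConcaveOn ℝ (Ici 0) f) (hf0 : 0 ≤ f 0) {a b : ℝ}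
    (ha : 0 ≤ a) (hb : 0 ≤ b) : f (a + b) ≤ f a + f b := by
  rcases (add_nonneg ha hb).eq_or_lt with hab | hab
  · obtain ⟨rfl, rfl⟩ : a = 0 ∧ b = 0 := ⟨by linarith, by linarith⟩
    simpa using hf0
  have hca := hf.mul_le_map_mul hf0 (div_nonneg ha hab.le)
    ((div_le_one hab).2 (by linarith)) hab.le
  have hcb := hf.mul_le_map_mul hf0 (div_nonneg hb hab.le)
    ((div_le_one hab).2 (by linarith)) hab.le
  rw [div_mul_cancel₀ _ hab.ne'] at hca hcb
  calc f (a + b) = a / (a + b) * f (a + b) + b / (a + b) * f (a + b) := by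
        field_simp
    _ ≤ f a + f b := add_le_add hca hcb

end Concave

lemma sub_floor_mul_mem_Icc {t d : ℝ} (ht : 0 ≤ t) (hd : 0 ≤ d) : (t - ⌊t⌋₊) * d ∈ Icc 0 d :=
  ⟨mul_nonneg (sub_nonneg.2 (Nat.floor_le ht)) hd,
    mul_le_of_le_one_left hd (by linarith [Nat.lt_floor_add_one t])⟩

namespace IsGeodesicSpace

variable {X : Type*} [MetricSpace X] (hX : IsGeodesicSpace X)

noncomputable def segment (x y : X) : ℝ → X :=
  (hX x y).choose

lemma segment_zero (x y : X) : hX.segment x y 0 = x :=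
  (hX x y).choose_spec.1

lemma segment_dist (x y : X) : hX.segment x y (dist x y) = y :=
  (hX x y).choose_spec.2.1

lemma dist_segment_segment {x y : X} {a b : ℝ} (ha : a ∈ Icc 0 (dist x y))
    (hb : b ∈ Icc 0 (dist x y)) : dist (hX.segment x y a) (hX.segment x y b) = |a - b| :=
  (hX x y).choose_spec.2.2 a b ha hb

noncomputable def connectDots (p : ℕ → X) (t : ℝ) : X :=
  hX.segment (p ⌊t⌋₊) (p (⌊t⌋₊ + 1)) ((t - ⌊t⌋₊) * dist (p ⌊t⌋₊) (p (⌊t⌋₊ + 1)))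

variable (p : ℕ → X)

lemma connectDots_natCast (k : ℕ) : hX.connectDots p k = p k := by
  simp [connectDots, segment_zero]

lemma dist_connectDots_floor {t : ℝ} (ht : 0 ≤ t) :
    dist (hX.connectDots p t) (p ⌊t⌋₊) = (t - ⌊t⌋₊) * dist (p ⌊t⌋₊) (p (⌊t⌋₊ + 1)) := by
  have hd := dist_nonneg (x := p ⌊t⌋₊) (y := p (⌊t⌋₊ + 1))
  have hmem := sub_floor_mul_mem_Icc ht hd
  conv_lhs => rw [← hX.segment_zero (p ⌊t⌋₊) (p (⌊t⌋₊ + 1))]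
  rw [connectDots, hX.dist_segment_segment hmem ⟨le_rfl, hd⟩, sub_zero, abs_of_nonneg hmem.1]

lemma dist_connectDots_floor_add_one {t : ℝ} (ht : 0 ≤ t) :
    dist (hX.connectDots p t) (p (⌊t⌋₊ + 1)) =
      (⌊t⌋₊ + 1 - t) * dist (p ⌊t⌋₊) (p (⌊t⌋₊ + 1)) := by
  have hd := dist_nonneg (x := p ⌊t⌋₊) (y := p (⌊t⌋₊ + 1))
  have hmem := sub_floor_mul_mem_Icc ht hd
  conv_lhs => rw [← hX.segment_dist (p ⌊t⌋₊) (p (⌊t⌋₊ + 1))]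
  rw [connectDots, hX.dist_segment_segment hmem ⟨hd, le_rfl⟩,
    abs_of_nonpos (sub_nonpos.2 hmem.2)]
  ring

lemma dist_connectDots_le_of_le {s t : ℝ} (hs : 0 ≤ s) (hst : s ≤ t) (hts : t ≤ s + 1) :
    dist (hX.connectDots p s) (hX.connectDots p t) ≤
      (t - s) * (dist (p ⌊s⌋₊) (p (⌊s⌋₊ + 1)) + dist (p ⌊t⌋₊) (p (⌊t⌋₊ + 1))) := by
  have ht : 0 ≤ t := hs.trans hst
  have hds := dist_nonneg (x := p ⌊s⌋₊) (y := p (⌊s⌋₊ + 1))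
  have hdt := dist_nonneg (x := p ⌊t⌋₊) (y := p (⌊t⌋₊ + 1))
  have hfloor : ⌊t⌋₊ ≤ ⌊s⌋₊ + 1 := by
    simpa [Nat.floor_add_one hs] using Nat.floor_le_floor (R := ℝ) hts
  rcases (Nat.floor_le_floor (R := ℝ) hst).eq_or_lt with heq | hlt
  · have hseg : dist (hX.connectDots p s) (hX.connectDots p t) =
        (t - s) * dist (p ⌊s⌋₊) (p (⌊s⌋₊ + 1)) := by
      have hmem := sub_floor_mul_mem_Icc hs hds
      have hmem' : (t - ⌊s⌋₊) * dist (p ⌊s⌋₊) (p (⌊s⌋₊ + 1)) ∈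
          Icc 0 (dist (p ⌊s⌋₊) (p (⌊s⌋₊ + 1))) := by
        simpa only [heq] using sub_floor_mul_mem_Icc ht hdt
      rw [connectDots, connectDots, ← heq, hX.dist_segment_segment hmem hmem', ← sub_mul,
        abs_mul, abs_of_nonpos (by linarith), abs_of_nonneg hds]
      ring
    rw [hseg]
    nlinarith
  · -- the only dot between `s` and `t` is `p ⌊t⌋₊ = p (⌊s⌋₊ + 1)`
    have hnext : ⌊t⌋₊ = ⌊s⌋₊ + 1 := le_antisymm hfloor hlt
    have hst' : s ≤ ⌊t⌋₊ := by
      rw [hnext]; push_cast; linarith [Nat.lt_floor_add_one s]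
    calc dist (hX.connectDots p s) (hX.connectDots p t)
        ≤ dist (hX.connectDots p s) (p ⌊t⌋₊) + dist (hX.connectDots p t) (p ⌊t⌋₊) :=
          dist_triangle_right _ _ _
      _ = (⌊t⌋₊ - s) * dist (p ⌊s⌋₊) (p (⌊s⌋₊ + 1)) +
            (t - ⌊t⌋₊) * dist (p ⌊t⌋₊) (p (⌊t⌋₊ + 1)) := by
          rw [hX.dist_connectDots_floor p ht, hnext, hX.dist_connectDots_floor_add_one p hs]
          push_cast; ring
      _ ≤ (t - s) * (dist (p ⌊s⌋₊) (p (⌊s⌋₊ + 1)) + dist (p ⌊t⌋₊) (p (⌊t⌋₊ + 1))) := by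
          nlinarith [Nat.floor_le ht]

lemma dist_connectDots_le {s t : ℝ} (hs : 0 ≤ s) (ht : 0 ≤ t) (hst : |s - t| ≤ 1) :
    dist (hX.connectDots p s) (hX.connectDots p t) ≤
      |s - t| * (dist (p ⌊s⌋₊) (p (⌊s⌋₊ + 1)) + dist (p ⌊t⌋₊) (p (⌊t⌋₊ + 1))) := by
  rcases le_total s t with h | h
  · rw [abs_of_nonpos (sub_nonpos.2 h), neg_sub]
    exact hX.dist_connectDots_le_of_le p hs h (by linarith [neg_abs_le (s - t)])
  · rw [abs_of_nonneg (sub_nonneg.2 h), dist_comm, add_comm]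
    exact hX.dist_connectDots_le_of_le p ht h (by linarith [le_abs_self (s - t)])

theorem continuousOn_connectDots : ContinuousOn (hX.connectDots p) (Ici 0) := by
  intro x hx
  -- bounds every step length `dist (p k) (p (k + 1))` that occurs within distance `1` of `x`
  set S := ∑ k ∈ Finset.range (⌊x⌋₊ + 2), dist (p k) (p (k + 1))
  have hstep : ∀ y, y ≤ x + 1 → dist (p ⌊y⌋₊) (p (⌊y⌋₊ + 1)) ≤ S := fun y hy =>
    Finset.single_le_sum (f := fun k => dist (p k) (p (k + 1))) (fun k _ => dist_nonneg) <|
      Finset.mem_range.2 <| Nat.lt_succ_of_le <|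
        (Nat.floor_le_floor hy).trans (Nat.floor_add_one hx).le
  have hbound : ∀ᶠ y in 𝓝[Ici 0] x,
      dist (hX.connectDots p y) (hX.connectDots p x) ≤ |y - x| * (2 * S) := by
    filter_upwards [self_mem_nhdsWithin,
      mem_nhdsWithin_of_mem_nhds (Icc_mem_nhds (by linarith : x - 1 < x) (lt_add_one x))]
      with y hy hyx
    have hyx' : |y - x| ≤ 1 := abs_sub_le_iff.2 ⟨by linarith [hyx.2], by linarith [hyx.1]⟩
    refine (hX.dist_connectDots_le p hy hx hyx').trans (mul_le_mul_of_nonneg_left ?_ (abs_nonneg _))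
    linarith [hstep y hyx.2, hstep x (by linarith)]
  rw [ContinuousWithinAt, tendsto_iff_dist_tendsto_zero]
  refine squeeze_zero' (Eventually.of_forall fun _ => dist_nonneg) hbound ?_
  have hlim : Tendsto (fun y => |y - x| * (2 * S)) (𝓝 x) (𝓝 (|x - x| * (2 * S))) :=
    ((continuous_id.sub continuous_const).abs.mul continuous_const).tendsto x
  simpa using hlim.mono_left nhdsWithin_le_nhds

end IsGeodesicSpace

namespace IsRay

variable {X : Type*} [MetricSpace X] {o : X} {L : ℝ} {θ : ℝ → ℝ} {γ : ℝ → X}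

lemma dist_le_of_le_add_one (hγ : IsRay o L θ γ) (hL : 0 ≤ L) {s t : ℝ} (hs : 0 ≤ s)
    (hst : s ≤ t) (hts : t ≤ s + 1) : dist (γ s) (γ t) ≤ L + θ t := by
  have h := (hγ.2 s t hs (hs.trans hst)).2
  rw [abs_of_nonpos (sub_nonpos.2 hst), max_eq_right hst] at h
  nlinarith

lemma dist_connectDots_le (hγ : IsRay o L θ γ) (hX : IsGeodesicSpace X) (hL : 0 ≤ L)
    (hθc : ConcaveOn ℝ (Ici 0) θ) (hθm : Monotone θ) (hθ0 : 1 ≤ θ 0) {t : ℝ} (ht : 0 ≤ t) :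
    dist (γ t) (hX.connectDots (fun k : ℕ => γ k) t) ≤ (2 * L + θ 1 + 2) * θ t := by
  have hk : (⌊t⌋₊ : ℝ) ≤ t := Nat.floor_le ht
  have hk' : t < ⌊t⌋₊ + 1 := Nat.lt_floor_add_one t
  have hθt : 1 ≤ θ t := hθ0.trans (hθm ht)
  have hθ1 : 1 ≤ θ 1 := hθ0.trans (hθm zero_le_one)
  have hnode : dist (γ t) (γ ⌊t⌋₊) ≤ L + θ t := by
    rw [dist_comm]; exact hγ.dist_le_of_le_add_one hL (Nat.cast_nonneg _) hk hk'.le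
  have hstep : dist (γ ⌊t⌋₊) (γ (⌊t⌋₊ + 1)) ≤ L + θ (⌊t⌋₊ + 1) :=
    hγ.dist_le_of_le_add_one hL (Nat.cast_nonneg _) (by linarith) le_rfl
  have hdot : dist (hX.connectDots (fun k : ℕ => γ k) t) (γ ⌊t⌋₊) ≤ L + θ (⌊t⌋₊ + 1) := by
    rw [hX.dist_connectDots_floor _ ht]
    push_cast
    nlinarith [dist_nonneg (x := γ ⌊t⌋₊) (y := γ (⌊t⌋₊ + 1))]
  have hsub : θ (⌊t⌋₊ + 1) ≤ θ t + θ 1 :=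
    (hθm (by linarith)).trans (hθc.map_add_le (by linarith) ht zero_le_one)
  calc dist (γ t) (hX.connectDots (fun k : ℕ => γ k) t)
      ≤ dist (γ t) (γ ⌊t⌋₊) + dist (hX.connectDots (fun k : ℕ => γ k) t) (γ ⌊t⌋₊) :=
        dist_triangle_right _ _ _
    _ ≤ 2 * L + θ 1 + 2 * θ t := by linarith
    _ ≤ (2 * L + θ 1 + 2) * θ t := by nlinarith

lemma of_dist_le (hγ : IsRay o L θ γ) (hθm : Monotone θ) {c : ℝ} (hc : 0 ≤ c) {γ' : ℝ → X}
    (h0 : γ' 0 = o) (hclose : ∀ t, 0 ≤ t → dist (γ t) (γ' t) ≤ c * θ t) :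
    IsRay o L (fun t => (2 * c + 1) * θ t) γ' := by
  refine ⟨h0, fun s t hs ht => ?_⟩
  dsimp only
  have hcs := (hclose s hs).trans (mul_le_mul_of_nonneg_left (hθm (le_max_left s t)) hc)
  have hct := (hclose t ht).trans (mul_le_mul_of_nonneg_left (hθm (le_max_right s t)) hc)
  have hγst := hγ.2 s t hs ht
  have h₁ := dist_triangle4 (γ s) (γ' s) (γ' t) (γ t)
  have h₂ := dist_triangle4 (γ' s) (γ s) (γ t) (γ' t)
  constructor <;> linarith [dist_comm (γ s) (γ' s), dist_comm (γ t) (γ' t)]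

end IsRay

theorem connect_the_dots_general
    {X : Type*} [MetricSpace X] (hgeo : IsGeodesicSpace X)
    (o : X) (L : ℝ) (hL : 1 ≤ L) (θ : ℝ → ℝ)
    (hθc : ConcaveOn ℝ (Set.Ici 0) θ) (hθm : Monotone θ) (hθ1 : ∀ r : ℝ, 1 ≤ θ r)
    (γ : ℝ → X) (hγ : IsRay o L θ γ) :
    ∃ n > (0:ℝ), ∃ γhat : ℝ → X,
      ContinuousOn γhat (Set.Ici 0) ∧
      IsRay o L (fun t => n * θ t) γhat ∧
      (∀ k : ℕ, γhat k = γ k) ∧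
      (∀ t : ℝ, 0 ≤ t → dist (γ t) (γhat t) ≤ n * θ t) := by
  set c := 2 * L + θ 1 + 2
  have hc : 0 ≤ c := by linarith [hθ1 1]
  set γhat := hgeo.connectDots fun k : ℕ => γ k
  have hclose : ∀ t, 0 ≤ t → dist (γ t) (γhat t) ≤ c * θ t := fun t ht =>
    hγ.dist_connectDots_le hgeo (by linarith) hθc hθm (hθ1 0) ht
  have hdots : ∀ k : ℕ, γhat k = γ k := hgeo.connectDots_natCast _
  have hγhat0 : γhat 0 = o := by rw [← hγ.1]; exact_mod_cast hdots 0
  refine ⟨2 * c + 1, by linarith, γhat, hgeo.continuousOn_connectDots _,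
    hγ.of_dist_le hθm hc hγhat0 hclose, hdots, fun t ht => (hclose t ht).trans ?_⟩
  exact mul_le_mul_of_nonneg_right (by linarith) (by linarith [hθ1 t])

/-- Connect-the-dots: any `(L,θ)`-ray in a proper geodesic space admits a
continuous completion, which is an `(L, n·θ)`-ray agreeing with `γ` at every
nonnegative integer, and staying within `n·θ(t)` of `γ(t)` for all `t`. -/
theorem connect_the_dots
    {X : Type*} [MetricSpace X] [ProperSpace X] (hgeo : IsGeodesicSpace X)
    (o : X) (L : ℝ) (hL : 1 ≤ L) (θ : ℝ → ℝ)
    (hθc : ConcaveOn ℝ (Set.Ici 0) θ) (hθm : Monotone θ) (hθ1 : ∀ r : ℝ, 1 ≤ θ r)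
    (hθsub : Tendsto (fun r => θ r / r) atTop (nhds 0))
    (γ : ℝ → X) (hγ : IsRay o L θ γ) :
    ∃ n > (0:ℝ), ∃ γhat : ℝ → X,
      ContinuousOn γhat (Set.Ici 0) ∧
      IsRay o L (fun t => n * θ t) γhat ∧
      (∀ k : ℕ, γhat k = γ k) ∧
      (∀ t : ℝ, 0 ≤ t → dist (γ t) (γhat t) ≤ n * θ t) :=
  connect_the_dots_general hgeo o L hL θ hθc hθm hθ1 γ hγ
end

section
/- Let α and β be (L,θ)-rays in a proper geodesic metric space X based at the same point. If lim_{t→∞} d(α(t), β)/t = 0 (where d(α(t),β) = inf_s d(α(t),β(s))), then lim_{t→∞} d(β(t), α)/t = 0. In other words, the relation of sublinear tracking between sublinear rays is symmetric. -/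
open Metric Set Filter

/-!
Choose for every `s` a parameter `u s` with `β (u s)` within `infDist (α s) β + 1` of `α s`.
The ray inequalities make `u` coarsely linear in both directions, and the jumps
`u (s + 1) - u s` are sublinear in `s`. Hence for every `t` some `u m` with `m = O(t)` lies
within a sublinear distance of `t`, and `β t` is sublinearly close to `β (u m)`, hence to `α m`.
-/

/-- For `f ≥ 0` this is `f x / x → 0`, but in a form uniform on `[0, ∞)` that survives
composition with linearly bounded reparametrizations. -/
def IsSublinear (f : ℝ → ℝ) : Prop :=
  ∀ ε > 0, ∃ C, ∀ x, 0 ≤ x → f x ≤ ε * x + C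

namespace IsSublinear

variable {f g : ℝ → ℝ}

theorem of_tendsto_div (h : Tendsto (fun x => f x / x) atTop (nhds 0))
    (hb : ∀ T, ∃ M, ∀ x ∈ Icc 0 T, f x ≤ M) : IsSublinear f := by
  intro ε hε
  obtain ⟨T, hT⟩ := eventually_atTop.1 (h.eventually (gt_mem_nhds hε))
  obtain ⟨M, hM⟩ := hb (max T 1)
  refine ⟨max M 0, fun x hx => ?_⟩
  have hεx : 0 ≤ ε * x := mul_nonneg hε.le hx
  rcases le_or_gt x (max T 1) with hxT | hxT
  · linarith [hM x ⟨hx, hxT⟩, le_max_left M 0]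
  · have hx1 : 0 < x := by linarith [le_max_right T 1]
    have := (div_lt_iff₀ hx1).1 (hT x ((le_max_left T 1).trans hxT.le))
    linarith [le_max_right M 0]

theorem tendsto_div (hf : IsSublinear f) (h0 : ∀ x, 0 ≤ f x) :
    Tendsto (fun x => f x / x) atTop (nhds 0) := by
  refine Asymptotics.IsLittleO.tendsto_div_nhds_zero (Asymptotics.isLittleO_iff.2 fun c hc => ?_)
  obtain ⟨C, hC⟩ := hf (c / 2) (half_pos hc)
  filter_upwards [eventually_ge_atTop (2 * C / c), eventually_ge_atTop 0] with x hxC hx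
  rw [Real.norm_of_nonneg (h0 x), Real.norm_of_nonneg hx]
  rw [div_le_iff₀ hc] at hxC
  linarith [hC x hx]

theorem mono (hf : IsSublinear f) (h : ∀ x, 0 ≤ x → g x ≤ f x) : IsSublinear g :=
  fun ε hε => (hf ε hε).imp fun _ hC x hx => (h x hx).trans (hC x hx)

theorem const (c : ℝ) : IsSublinear fun _ => c :=
  fun _ hε => ⟨c, fun _ hx => le_add_of_nonneg_left (mul_nonneg hε.le hx)⟩

theorem add (hf : IsSublinear f) (hg : IsSublinear g) : IsSublinear fun x => f x + g x := by
  intro ε hε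
  obtain ⟨C, hC⟩ := hf (ε / 2) (half_pos hε)
  obtain ⟨D, hD⟩ := hg (ε / 2) (half_pos hε)
  exact ⟨C + D, fun x hx => by linarith [hC x hx, hD x hx]⟩

theorem const_mul (hf : IsSublinear f) {c : ℝ} (hc : 0 ≤ c) : IsSublinear fun x => c * f x := by
  intro ε hε
  obtain ⟨C, hC⟩ := hf (ε / (c + 1)) (by positivity)
  refine ⟨c * C, fun x hx => ?_⟩
  have hcε : c * (ε / (c + 1)) ≤ ε := by
    rw [mul_div_assoc', div_le_iff₀ (by positivity)]
    nlinarith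
  calc c * f x ≤ c * (ε / (c + 1) * x + C) := mul_le_mul_of_nonneg_left (hC x hx) hc
    _ = c * (ε / (c + 1)) * x + c * C := by ring
    _ ≤ ε * x + c * C := by gcongr

theorem comp (hf : IsSublinear f) {a b : ℝ} (ha : 0 ≤ a)
    (hg : ∀ x, 0 ≤ x → 0 ≤ g x ∧ g x ≤ a * x + b) : IsSublinear fun x => f (g x) := by
  intro ε hε
  obtain ⟨C, hC⟩ := hf (ε / (a + 1)) (by positivity)
  refine ⟨ε / (a + 1) * b + C, fun x hx => ?_⟩
  obtain ⟨hg0, hgx⟩ := hg x hx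
  have haε : ε / (a + 1) * a ≤ ε := by
    rw [div_mul_eq_mul_div, div_le_iff₀ (by positivity)]
    nlinarith
  calc f (g x) ≤ ε / (a + 1) * g x + C := hC _ hg0
    _ ≤ ε / (a + 1) * (a * x + b) + C := by gcongr
    _ = ε / (a + 1) * a * x + (ε / (a + 1) * b + C) := by ring
    _ ≤ ε * x + (ε / (a + 1) * b + C) := by gcongr

theorem exists_le_two_mul_add (hf : IsSublinear f) :
    ∃ K, ∀ x y, 0 ≤ x → x ≤ y + f x → x ≤ 2 * y + K := by
  obtain ⟨C, hC⟩ := hf (1 / 2) one_half_pos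
  exact ⟨2 * C, fun x y hx h => by linarith [hC x hx]⟩

end IsSublinear

namespace IsRay

variable {X : Type*} [MetricSpace X] {o : X} {L : ℝ} {θ : ℝ → ℝ} {γ : ℝ → X} {s t : ℝ}

theorem dist_le (h : IsRay o L θ γ) (hs : 0 ≤ s) (ht : 0 ≤ t) :
    dist (γ s) (γ t) ≤ L * |s - t| + θ (max s t) :=
  (h.2 s t hs ht).2

theorem abs_sub_le (h : IsRay o L θ γ) (hL : 0 < L) (hs : 0 ≤ s) (ht : 0 ≤ t) :
    |s - t| ≤ L * dist (γ s) (γ t) + L * θ (max s t) := by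
  have h' := (h.2 s t hs ht).1
  rw [one_div, ← div_eq_inv_mul, sub_le_iff_le_add, div_le_iff₀ hL] at h'
  linarith

theorem dist_base_le (h : IsRay o L θ γ) (hs : 0 ≤ s) : dist (γ s) o ≤ L * s + θ s := by
  simpa [h.1, abs_of_nonneg hs, hs] using h.dist_le hs le_rfl

theorem le_dist_base (h : IsRay o L θ γ) (hL : 0 < L) (hs : 0 ≤ s) :
    s ≤ L * dist (γ s) o + L * θ s := by
  simpa [h.1, abs_of_nonneg hs, hs] using h.abs_sub_le hL hs le_rfl

end IsRay

theorem exists_abs_sub_le_step {u : ℕ → ℝ} {t : ℝ} {N : ℕ} (ht : 0 ≤ t) (hN : t ≤ u N) :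
    ∃ m ≤ N, |t - u m| ≤ max (u 0) |u (m + 1) - u m| := by
  have hex : ∃ n, t ≤ u n := ⟨N, hN⟩
  have hreach := Nat.find_spec hex
  have hle : Nat.find hex ≤ N := Nat.find_min' hex hN
  rcases hn : Nat.find hex with _ | m
  · rw [hn] at hreach
    refine ⟨0, N.zero_le, ?_⟩
    rw [abs_of_nonpos (by linarith)]
    linarith [le_max_left (u 0) |u (0 + 1) - u 0|]
  · rw [hn] at hreach hle
    have hm : u m < t := not_le.1 (Nat.find_min hex (by omega))
    refine ⟨m, by omega, le_max_of_le_right ?_⟩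
    rw [abs_of_pos (by linarith), abs_of_pos (by linarith)]
    linarith

theorem exists_nat_abs_sub_le_step_of_le_mul_add {u : ℝ → ℝ} {A B t : ℝ} (hu : ∀ s, 0 ≤ u s)
    (hA : 0 ≤ A) (hlow : ∀ s, 0 ≤ s → s ≤ A * u s + B) (ht : 0 ≤ t) :
    ∃ m : ℕ, (m : ℝ) ≤ A * t + (|B| + 1) ∧ |t - u m| ≤ u 0 + |u (m + 1) - u m| := by
  set N := ⌊A * t + |B|⌋₊ + 1
  have hN : A * t + |B| < N := by simpa [N] using Nat.lt_floor_add_one (A * t + |B|)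
  have hNt : t ≤ u N := by
    by_contra! h
    nlinarith [hlow N N.cast_nonneg, le_abs_self B]
  obtain ⟨m, hmN, hm⟩ := exists_abs_sub_le_step (u := fun n : ℕ => u n) ht hNt
  refine ⟨m, ?_, ?_⟩
  · have := Nat.floor_le (by positivity : 0 ≤ A * t + |B|)
    have : (m : ℝ) ≤ N := by exact_mod_cast hmN
    push_cast [N] at *
    linarith
  · push_cast at hm
    exact hm.trans (max_le_add_of_nonneg (hu 0) (abs_nonneg _))

section Reparametrization

variable {X : Type*} [MetricSpace X] {o : X} {L : ℝ} {θ : ℝ → ℝ} {α β : ℝ → X} {u : ℝ → ℝ}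

theorem exists_reparam_le (hα : IsRay o L θ α) (hβ : IsRay o L θ β) (hL : 0 < L)
    (hθ : IsSublinear θ) (hu : ∀ s, 0 ≤ u s) (hD : IsSublinear fun s => dist (α s) (β (u s))) :
    ∃ A B, 0 ≤ A ∧ ∀ s, 0 ≤ s → u s ≤ A * s + B := by
  obtain ⟨K, hK⟩ := (hθ.const_mul hL.le).exists_le_two_mul_add
  obtain ⟨C₁, hC₁⟩ := hD 1 one_pos
  obtain ⟨C₂, hC₂⟩ := hθ 1 one_pos
  refine ⟨2 * L * (L + 2), 2 * L * (C₁ + C₂) + K, by positivity, fun s hs => ?_⟩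
  have hβo : dist (β (u s)) o ≤ dist (α s) (β (u s)) + dist (α s) o := dist_triangle_left _ _ _
  have hy := hK (u s) (L * (dist (α s) (β (u s)) + L * s + θ s)) (hu s) (by
    nlinarith [hβ.le_dist_base hL (hu s), hα.dist_base_le hs])
  nlinarith [hC₁ s hs, hC₂ s hs]

theorem exists_le_reparam (hα : IsRay o L θ α) (hβ : IsRay o L θ β) (hL : 0 < L)
    (hθ : IsSublinear θ) (hu : ∀ s, 0 ≤ u s) (hD : IsSublinear fun s => dist (α s) (β (u s))) :
    ∃ A B, 0 ≤ A ∧ ∀ s, 0 ≤ s → s ≤ A * u s + B := by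
  obtain ⟨K, hK⟩ := ((hD.add hθ).const_mul hL.le).exists_le_two_mul_add
  obtain ⟨C, hC⟩ := hθ 1 one_pos
  refine ⟨2 * L * (L + 1), 2 * L * C + K, by positivity, fun s hs => ?_⟩
  have hαo : dist (α s) o ≤ dist (α s) (β (u s)) + dist (β (u s)) o := dist_triangle _ _ _
  have hy := hK s (L * (L * u s + θ (u s))) hs (by
    nlinarith [hα.le_dist_base hL hs, hβ.dist_base_le (hu s)])
  nlinarith [hC (u s) (hu s)]

theorem isSublinear_reparam_step (hα : IsRay o L θ α) (hβ : IsRay o L θ β) (hL : 0 < L)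
    (hθ : IsSublinear θ) (hu : ∀ s, 0 ≤ u s) (hD : IsSublinear fun s => dist (α s) (β (u s))) :
    IsSublinear fun s => |u (s + 1) - u s| := by
  obtain ⟨A, B, hA, hup⟩ := exists_reparam_le hα hβ hL hθ hu hD
  have hshift : ∀ s : ℝ, 0 ≤ s → 0 ≤ s + 1 ∧ s + 1 ≤ 1 * s + 1 :=
    fun s hs => ⟨by linarith, by linarith⟩
  have hmax : ∀ s, 0 ≤ s → 0 ≤ max (u (s + 1)) (u s) ∧ max (u (s + 1)) (u s) ≤ A * s + (A + B) :=
    fun s hs => ⟨le_max_of_le_right (hu s), max_le (by linarith [hup (s + 1) (by linarith)])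
      (by nlinarith [hup s hs])⟩
  refine ((((hD.comp zero_le_one hshift).add ((IsSublinear.const L).add
    (hθ.comp zero_le_one hshift))).add hD).const_mul hL.le |>.add
    ((hθ.comp hA hmax).const_mul hL.le)).mono fun s hs => ?_
  have hαα : dist (α (s + 1)) (α s) ≤ L + θ (s + 1) := by
    simpa [max_eq_left (by linarith : s ≤ s + 1)] using hα.dist_le (by linarith : 0 ≤ s + 1) hs
  have hββ : dist (β (u (s + 1))) (β (u s)) ≤
      dist (α (s + 1)) (β (u (s + 1))) + dist (α (s + 1)) (α s) + dist (α s) (β (u s)) := by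
    linarith [dist_triangle4 (β (u (s + 1))) (α (s + 1)) (α s) (β (u s)),
      dist_comm (β (u (s + 1))) (α (s + 1))]
  have := hβ.abs_sub_le hL (hu (s + 1)) (hu s)
  nlinarith

theorem isSublinear_infDist_of_reparam (hα : IsRay o L θ α) (hβ : IsRay o L θ β) (hL : 0 < L)
    (hθ : IsSublinear θ) (hu : ∀ s, 0 ≤ u s) (hD : IsSublinear fun s => dist (α s) (β (u s))) :
    IsSublinear fun t => infDist (β t) (α '' Ici 0) := by
  obtain ⟨A, B, hA, hlow⟩ := exists_le_reparam hα hβ hL hθ hu hD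
  have hreach : ∀ t, ∃ m : ℕ, 0 ≤ t →
      (m : ℝ) ≤ A * t + (|B| + 1) ∧ |t - u m| ≤ u 0 + |u (m + 1) - u m| := by
    intro t
    by_cases ht : 0 ≤ t
    · exact (exists_nat_abs_sub_le_step_of_le_mul_add hu hA hlow ht).imp fun _ h _ => h
    · exact ⟨0, fun h => absurd h ht⟩
  choose m hm using hreach
  have hmlin : ∀ t, 0 ≤ t → 0 ≤ (m t : ℝ) ∧ (m t : ℝ) ≤ A * t + (|B| + 1) :=
    fun t ht => ⟨Nat.cast_nonneg _, (hm t ht).1⟩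
  have hstep := (isSublinear_reparam_step hα hβ hL hθ hu hD).comp hA hmlin
  obtain ⟨C, hC⟩ := hstep 1 one_pos
  have hmax : ∀ t, 0 ≤ t → 0 ≤ max t (u (m t)) ∧ max t (u (m t)) ≤ 2 * t + (u 0 + C) := by
    intro t ht
    have hclose := (hm t ht).2
    have hC' := hC t ht
    dsimp only at hC'
    have hu_le : u (m t) ≤ t + |t - u (m t)| := by
      linarith [le_abs_self (u (m t) - t), abs_sub_comm t (u (m t))]
    have := abs_nonneg (u (m t + 1) - u (m t))
    exact ⟨le_max_of_le_left ht, max_le (by linarith [hu 0]) (by linarith)⟩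
  refine (((IsSublinear.const (L * u 0)).add (hstep.const_mul hL.le)).add
    ((hθ.comp zero_le_two hmax).add (hD.comp hA hmlin))).mono fun t ht => ?_
  have hmem : α (m t) ∈ α '' Ici 0 := mem_image_of_mem α (mem_Ici.2 (Nat.cast_nonneg _))
  calc infDist (β t) (α '' Ici 0)
      ≤ dist (β t) (β (u (m t))) + dist (α (m t)) (β (u (m t))) :=
        (infDist_le_dist_of_mem hmem).trans (dist_triangle_right _ _ _)
    _ ≤ L * |t - u (m t)| + θ (max t (u (m t))) + dist (α (m t)) (β (u (m t))) := by
        gcongr; exact hβ.dist_le ht (hu _)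
    _ ≤ _ := by nlinarith [(hm t ht).2]

end Reparametrization

theorem sublinear_tracking_symm_general
    {X : Type*} [MetricSpace X]
    (o : X) (L : ℝ) (hL : 1 ≤ L)
    (θ : ℝ → ℝ) (hθm : Monotone θ)
    (hθsub : Tendsto (fun r => θ r / r) atTop (nhds 0))
    (α β : ℝ → X) (hα : IsRay o L θ α) (hβ : IsRay o L θ β)
    (htrack : Tendsto (fun t => infDist (α t) (β '' Set.Ici 0) / t) atTop (nhds 0)) :
    Tendsto (fun t => infDist (β t) (α '' Set.Ici 0) / t) atTop (nhds 0) := by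
  have hL0 : 0 < L := zero_lt_one.trans_le hL
  have hθ : IsSublinear θ := .of_tendsto_div hθsub fun T => ⟨θ T, fun x hx => hθm hx.2⟩
  have hβ0 : β 0 ∈ β '' Ici 0 := mem_image_of_mem β self_mem_Ici
  have hαβ : IsSublinear fun s => infDist (α s) (β '' Ici 0) := by
    refine .of_tendsto_div htrack fun T => ⟨L * T + θ T, fun x hx => ?_⟩
    calc infDist (α x) (β '' Ici 0) ≤ dist (α x) o := hβ.1 ▸ infDist_le_dist_of_mem hβ0
      _ ≤ L * x + θ x := hα.dist_base_le hx.1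
      _ ≤ L * T + θ T := by gcongr; exacts [hx.2, hθm hx.2]
  have hproj : ∀ s, ∃ v, 0 ≤ v ∧ dist (α s) (β v) < infDist (α s) (β '' Ici 0) + 1 := by
    intro s
    obtain ⟨_, ⟨v, hv, rfl⟩, h⟩ := (infDist_lt_iff ⟨_, hβ0⟩).1 (lt_add_one _)
    exact ⟨v, hv, h⟩
  choose u hu hdist using hproj
  have hD : IsSublinear fun s => dist (α s) (β (u s)) :=
    (hαβ.add (.const 1)).mono fun s _ => (hdist s).le
  exact (isSublinear_infDist_of_reparam hα hβ hL0 hθ hu hD).tendsto_div fun _ => infDist_nonneg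

/-- Symmetry of sublinear tracking between `(L,θ)`-rays: if `α` sublinearly
tracks `β`, then `β` sublinearly tracks `α`. -/
theorem sublinear_tracking_symm
    {X : Type*} [MetricSpace X] [ProperSpace X] (hgeo : IsGeodesicSpace X)
    (o : X) (L : ℝ) (hL : 1 ≤ L)
    (θ : ℝ → ℝ) (hθc : ConcaveOn ℝ (Set.Ici 0) θ) (hθm : Monotone θ)
    (hθ1 : ∀ r : ℝ, 1 ≤ θ r)
    (hθsub : Tendsto (fun r => θ r / r) atTop (nhds 0))
    (α β : ℝ → X) (hα : IsRay o L θ α) (hβ : IsRay o L θ β)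
    (htrack : Tendsto (fun t => infDist (α t) (β '' Set.Ici 0) / t) atTop (nhds 0)) :
    Tendsto (fun t => infDist (β t) (α '' Set.Ici 0) / t) atTop (nhds 0) :=
  sublinear_tracking_symm_general o L hL θ hθm hθsub α β hα hβ htrack
end

section
/- Let Φ : X → Y be an (L,θ)-sublinear biLipschitz equivalence between proper geodesic pointed metric spaces. Then there exists a map Φ̄ : Y → X which is an (L',θ')-sublinear biLipschitz equivalence for some constant L' and function θ' = O(θ), and a constant n > 0 such that d(x, Φ̄(Φ(x))) ≤ n·θ(‖x‖) for all x ∈ X and d(y, Φ(Φ̄(y))) ≤ n·θ(‖y‖) for all y ∈ Y. -/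
open Metric Set Filter

/-- `Φ` is an `(L,θ)`-sublinear biLipschitz equivalence between the pointed
metric spaces `(X, oX)` and `(Y, oY)`. -/
def IsSBE {X Y : Type*} [MetricSpace X] [MetricSpace Y] (oX : X) (oY : Y)
    (L : ℝ) (θ : ℝ → ℝ) (Φ : X → Y) : Prop :=
  (∀ x₁ x₂ : X,
    (1 / L) * dist x₁ x₂ - θ (max (dist x₁ oX) (dist x₂ oX)) ≤ dist (Φ x₁) (Φ x₂) ∧
    dist (Φ x₁) (Φ x₂) ≤ L * dist x₁ x₂ + θ (max (dist x₁ oX) (dist x₂ oX))) ∧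
  ∃ D ≥ (0:ℝ), ∀ y : Y, infDist y (Set.range Φ) ≤ D * θ (dist y oY)

/-! The coarse inverse sends `y` to any `x` with `d(Φ x, y) ≤ (D + 1) θ(‖y‖)`. Sublinearity
of `θ` makes `Φ`, `Ψ` and `Ψ ∘ Φ` grow at most affinely, and concavity (`θ (c r) ≤ c θ r` for
`c ≥ 1`) turns affine growth `‖f x‖ ≤ A ‖x‖ + B` into `θ (‖f x‖) = O(θ (‖x‖))`. Every error
term `θ` evaluated at an image point is therefore `O(θ)` of the original point, and the SBE
bounds for `Ψ` and both inverse estimates follow from those of `Φ` by the triangle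
inequality. -/

section SublinearFunction

variable {θ : ℝ → ℝ}

theorem ConcaveOn.apply_mul_le_mul_apply (hθc : ConcaveOn ℝ (Ici 0) θ) (hθ0 : 0 ≤ θ 0)
    {c r : ℝ} (hc : 1 ≤ c) (hr : 0 ≤ r) : θ (c * r) ≤ c * θ r := by
  have hc0 : 0 < c := by linarith
  have hc1 : 0 ≤ 1 - c⁻¹ := sub_nonneg.2 (inv_le_one_of_one_le₀ hc)
  have hconc := hθc.2 (mem_Ici.2 (by positivity : 0 ≤ c * r)) (mem_Ici.2 le_rfl)
    (inv_nonneg.2 hc0.le) hc1 (by ring)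
  simp only [smul_eq_mul, mul_zero, add_zero, inv_mul_cancel_left₀ hc0.ne'] at hconc
  have : c⁻¹ * θ (c * r) ≤ θ r := (le_add_of_nonneg_right (mul_nonneg hc1 hθ0)).trans hconc
  rwa [inv_mul_le_iff₀ hc0] at this

theorem exists_apply_mul_add_one_le (hθc : ConcaveOn ℝ (Ici 0) θ) (hθm : Monotone θ)
    (hθ1 : ∀ r, 1 ≤ θ r) {A : ℝ} (hA : 0 ≤ A) :
    ∃ K ≥ 0, ∀ r, 0 ≤ r → θ (A * (r + 1)) ≤ K * θ r := by
  have hθ0 : ∀ r, 0 ≤ θ r := fun r => zero_le_one.trans (hθ1 r)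
  refine ⟨max (2 * A) 1 + θ (2 * A), by positivity [hθ0 (2 * A)], fun r hr => ?_⟩
  rcases le_total 1 r with h1 | h1
  · calc θ (A * (r + 1)) ≤ θ (max (2 * A) 1 * r) := hθm (by nlinarith [le_max_left (2 * A) 1])
      _ ≤ max (2 * A) 1 * θ r := hθc.apply_mul_le_mul_apply (hθ0 0) (le_max_right _ _) hr
      _ ≤ _ := by nlinarith [hθ0 r, hθ0 (2 * A)]
  · calc θ (A * (r + 1)) ≤ θ (2 * A) := hθm (by nlinarith)
      _ ≤ θ (2 * A) * θ r := le_mul_of_one_le_right (hθ0 _) (hθ1 r)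
      _ ≤ _ := by nlinarith [hθ0 r, le_max_right (2 * A) 1]

theorem exists_le_mul_add_of_tendsto_div (hθm : Monotone θ)
    (hθ : Tendsto (fun r => θ r / r) atTop (nhds 0)) {ε : ℝ} (hε : 0 < ε) :
    ∃ C, ∀ r, 0 ≤ r → θ r ≤ ε * r + C := by
  obtain ⟨r₀, hr₀⟩ := eventually_atTop.1 (hθ.eventually (gt_mem_nhds hε))
  refine ⟨|θ (max r₀ 1)|, fun r hr => ?_⟩
  rcases le_total (max r₀ 1) r with h | h
  · have hr1 : 0 < r := lt_of_lt_of_le one_pos ((le_max_right _ _).trans h)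
    have := (div_lt_iff₀ hr1).1 (hr₀ r ((le_max_left _ _).trans h))
    linarith [abs_nonneg (θ (max r₀ 1))]
  · linarith [hθm h, le_abs_self (θ (max r₀ 1)), mul_nonneg hε.le hr]

end SublinearFunction

section AffineGrowth

variable {X Y Z : Type*} [MetricSpace X] [MetricSpace Y] [MetricSpace Z] {oX : X} {oY : Y} {oZ : Z}

def HasAffineGrowth (oX : X) (oY : Y) (f : X → Y) : Prop :=
  ∃ A B : ℝ, ∀ x, dist (f x) oY ≤ A * dist x oX + B

theorem HasAffineGrowth.exists_nonneg {f : X → Y} (hf : HasAffineGrowth oX oY f) :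
    ∃ A ≥ 0, ∀ x, dist (f x) oY ≤ A * (dist x oX + 1) := by
  obtain ⟨A, B, h⟩ := hf
  refine ⟨max A 0 + max B 0, by positivity, fun x => (h x).trans ?_⟩
  nlinarith [le_max_left A 0, le_max_right A 0, le_max_left B 0, le_max_right B 0,
    dist_nonneg (x := x) (y := oX)]

theorem HasAffineGrowth.comp {g : Y → Z} {f : X → Y} (hg : HasAffineGrowth oY oZ g)
    (hf : HasAffineGrowth oX oY f) : HasAffineGrowth oX oZ (g ∘ f) := by
  obtain ⟨A, hA, hg⟩ := hg.exists_nonneg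
  obtain ⟨B, B', hf⟩ := hf
  refine ⟨A * B, A * (B' + 1), fun x => (hg (f x)).trans ?_⟩
  nlinarith [hf x]

theorem HasAffineGrowth.of_dist_apply_le {θ : ℝ → ℝ} (hθm : Monotone θ)
    (hθ : Tendsto (fun r => θ r / r) atTop (nhds 0)) {g : Y → Y} {E : ℝ} (hE : 0 ≤ E)
    (hg : ∀ y, dist (g y) y ≤ E * θ (dist y oY)) : HasAffineGrowth oY oY g := by
  obtain ⟨C, hC⟩ := exists_le_mul_add_of_tendsto_div hθm hθ one_pos
  refine ⟨E + 1, E * C, fun y => ?_⟩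
  have := mul_le_mul_of_nonneg_left (hC (dist y oY) dist_nonneg) hE
  linarith [dist_triangle (g y) y oY, hg y]

theorem HasAffineGrowth.exists_apply_le {θ : ℝ → ℝ} (hθc : ConcaveOn ℝ (Ici 0) θ)
    (hθm : Monotone θ) (hθ1 : ∀ r, 1 ≤ θ r) {f : X → Y} (hf : HasAffineGrowth oX oY f) :
    ∃ K ≥ 0, ∀ x, θ (dist (f x) oY) ≤ K * θ (dist x oX) := by
  obtain ⟨A, hA, hf⟩ := hf.exists_nonneg
  obtain ⟨K, hK, hθK⟩ := exists_apply_mul_add_one_le hθc hθm hθ1 hA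
  exact ⟨K, hK, fun x => (hθm (hf x)).trans (hθK _ dist_nonneg)⟩

end AffineGrowth

namespace IsSBE

variable {X Y : Type*} [MetricSpace X] [MetricSpace Y] {oX : X} {oY : Y} {L : ℝ}
  {θ : ℝ → ℝ} {Φ : X → Y}

theorem dist_apply_apply_le (hΦ : IsSBE oX oY L θ Φ) (x : X) :
    dist (Φ x) (Φ oX) ≤ L * dist x oX + θ (dist x oX) := by
  simpa [dist_self] using (hΦ.1 x oX).2

theorem le_dist_apply_apply (hΦ : IsSBE oX oY L θ Φ) (x : X) :
    (1 / L) * dist x oX - θ (dist x oX) ≤ dist (Φ x) (Φ oX) := by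
  simpa [dist_self] using (hΦ.1 x oX).1

theorem hasAffineGrowth (hΦ : IsSBE oX oY L θ Φ) (hθm : Monotone θ)
    (hθ : Tendsto (fun r => θ r / r) atTop (nhds 0)) : HasAffineGrowth oX oY Φ := by
  obtain ⟨C, hC⟩ := exists_le_mul_add_of_tendsto_div hθm hθ one_pos
  refine ⟨L + 1, C + dist (Φ oX) oY, fun x => ?_⟩
  linarith [dist_triangle (Φ x) (Φ oX) oY, hΦ.dist_apply_apply_le x,
    hC _ (dist_nonneg (x := x) (y := oX))]

theorem hasAffineGrowth_of_comp (hΦ : IsSBE oX oY L θ Φ) (hL : 0 < L) (hθm : Monotone θ)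
    (hθ : Tendsto (fun r => θ r / r) atTop (nhds 0)) {Ψ : Y → X}
    (hΦΨ : HasAffineGrowth oY oY (Φ ∘ Ψ)) : HasAffineGrowth oY oX Ψ := by
  obtain ⟨C, hC⟩ := exists_le_mul_add_of_tendsto_div hθm hθ (inv_pos.2 (mul_pos two_pos hL))
  have hproper : ∀ x, dist x oX ≤ 2 * L * (dist (Φ x) oY + (C + dist (Φ oX) oY)) := by
    intro x
    have hhalf : 1 / L * dist x oX = 2 * ((2 * L)⁻¹ * dist x oX) := by field_simp
    have h : (2 * L)⁻¹ * dist x oX ≤ dist (Φ x) oY + (C + dist (Φ oX) oY) := by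
      linarith [hΦ.le_dist_apply_apply x, hC _ (dist_nonneg (x := x) (y := oX)),
        dist_triangle (Φ x) oY (Φ oX), dist_comm oY (Φ oX)]
    rwa [inv_mul_le_iff₀ (by positivity)] at h
  obtain ⟨A, hA, hΦΨ⟩ := hΦΨ.exists_nonneg
  refine ⟨2 * L * A, 2 * L * (A + C + dist (Φ oX) oY), fun y => (hproper (Ψ y)).trans ?_⟩
  have := mul_le_mul_of_nonneg_left (hΦΨ y) (by positivity : 0 ≤ 2 * L)
  simp only [Function.comp_apply] at this
  linarith

theorem exists_right_inverse (hΦ : IsSBE oX oY L θ Φ) (hθ : ∀ r, 0 < θ r) :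
    ∃ Ψ : Y → X, ∃ E ≥ 0, ∀ y, dist (Φ (Ψ y)) y ≤ E * θ (dist y oY) := by
  obtain ⟨D, hD, hdense⟩ := hΦ.2
  -- `infDist` need not be attained, hence the slack from `D` to `D + 1`
  have hnear : ∀ y, ∃ x, dist (Φ x) y ≤ (D + 1) * θ (dist y oY) := by
    intro y
    have hlt : infDist y (range Φ) < (D + 1) * θ (dist y oY) := by
      linarith [hdense y, hθ (dist y oY)]
    obtain ⟨_, ⟨x, rfl⟩, hx⟩ := (infDist_lt_iff ⟨Φ oX, mem_range_self _⟩).1 hlt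
    exact ⟨x, by rw [dist_comm]; exact hx.le⟩
  choose Ψ hΨ using hnear
  exact ⟨Ψ, D + 1, by positivity, hΨ⟩

theorem dist_apply_comp_le (hΦ : IsSBE oX oY L θ Φ) (hL : 0 < L) (hθm : Monotone θ)
    (hθ0 : ∀ r, 0 ≤ θ r) {Ψ : Y → X} {E K₁ K₂ : ℝ} (hE : 0 ≤ E)
    (hright : ∀ y, dist (Φ (Ψ y)) y ≤ E * θ (dist y oY))
    (hK₁ : ∀ x, θ (dist (Φ x) oY) ≤ K₁ * θ (dist x oX))
    (hK₂ : ∀ x, θ (dist (Ψ (Φ x)) oX) ≤ K₂ * θ (dist x oX)) (x : X) :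
    dist x (Ψ (Φ x)) ≤ L * (E * K₁ + 1 + K₂) * θ (dist x oX) := by
  have hΦ' : dist (Φ x) (Φ (Ψ (Φ x))) ≤ E * K₁ * θ (dist x oX) := by
    rw [dist_comm, mul_assoc]
    exact (hright (Φ x)).trans (mul_le_mul_of_nonneg_left (hK₁ x) hE)
  have hmax : θ (max (dist x oX) (dist (Ψ (Φ x)) oX)) ≤ (1 + K₂) * θ (dist x oX) := by
    rw [hθm.map_max]
    linarith [max_le_add_of_nonneg (hθ0 (dist x oX)) (hθ0 (dist (Ψ (Φ x)) oX)), hK₂ x]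
  have h : 1 / L * dist x (Ψ (Φ x)) ≤ (E * K₁ + 1 + K₂) * θ (dist x oX) := by
    linarith [(hΦ.1 x (Ψ (Φ x))).1]
  rwa [one_div, inv_mul_le_iff₀ hL, ← mul_assoc] at h

theorem exists_isSBE_of_inverse (hΦ : IsSBE oX oY L θ Φ) (hL : 1 ≤ L) (hθm : Monotone θ)
    (hθ0 : ∀ r, 0 ≤ θ r) {Ψ : Y → X} {E K m : ℝ} (hE : 0 ≤ E) (hK : 0 ≤ K) (hm : 0 ≤ m)
    (hright : ∀ y, dist (Φ (Ψ y)) y ≤ E * θ (dist y oY))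
    (hΨ : ∀ y, θ (dist (Ψ y) oX) ≤ K * θ (dist y oY))
    (hleft : ∀ x, dist x (Ψ (Φ x)) ≤ m * θ (dist x oX)) :
    ∃ N ≥ 1, IsSBE oY oX L (fun t => N * θ t) Ψ := by
  have hL0 : 0 < L := by linarith
  have hN : 1 ≤ L * (2 * E + K) + 1 := by nlinarith
  refine ⟨L * (2 * E + K) + 1, hN, fun y₁ y₂ => ?_, m, hm, fun x => ?_⟩
  · dsimp only
    have hΨM : θ (max (dist (Ψ y₁) oX) (dist (Ψ y₂) oX)) ≤
        K * θ (max (dist y₁ oY) (dist y₂ oY)) := by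
      rw [hθm.map_max, hθm.map_max, mul_max_of_nonneg _ _ hK]
      exact max_le_max (hΨ y₁) (hΨ y₂)
    set M := θ (max (dist y₁ oY) (dist y₂ oY))
    have hM : 0 ≤ M := hθ0 _
    have h₁ : dist (Φ (Ψ y₁)) y₁ ≤ E * M :=
      (hright y₁).trans (mul_le_mul_of_nonneg_left (hθm (le_max_left _ _)) hE)
    have h₂ : dist (Φ (Ψ y₂)) y₂ ≤ E * M :=
      (hright y₂).trans (mul_le_mul_of_nonneg_left (hθm (le_max_right _ _)) hE)
    obtain ⟨hlow, hup⟩ := hΦ.1 (Ψ y₁) (Ψ y₂)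
    constructor
    · have h : dist y₁ y₂ ≤ L * dist (Ψ y₁) (Ψ y₂) + (2 * E + K) * M := by
        linarith [dist_triangle4 y₁ (Φ (Ψ y₁)) (Φ (Ψ y₂)) y₂, dist_comm y₁ (Φ (Ψ y₁))]
      rw [one_div, ← div_eq_inv_mul, sub_le_iff_le_add, div_le_iff₀ hL0]
      have hLL : 0 ≤ L * L - 1 := by nlinarith
      nlinarith [mul_nonneg (mul_nonneg hLL (by positivity : 0 ≤ 2 * E + K)) hM,
        mul_nonneg hL0.le hM]
    · have h : 1 / L * dist (Ψ y₁) (Ψ y₂) ≤ dist y₁ y₂ + (2 * E + K) * M := by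
        linarith [dist_triangle4 (Φ (Ψ y₁)) y₁ y₂ (Φ (Ψ y₂)), dist_comm y₂ (Φ (Ψ y₂))]
      rw [one_div, inv_mul_le_iff₀ hL0] at h
      nlinarith
  · calc infDist x (range Ψ) ≤ dist x (Ψ (Φ x)) := infDist_le_dist_of_mem (mem_range_self _)
      _ ≤ m * θ (dist x oX) := hleft x
      _ ≤ m * ((L * (2 * E + K) + 1) * θ (dist x oX)) :=
        mul_le_mul_of_nonneg_left (le_mul_of_one_le_left (hθ0 _) hN) hm

end IsSBE

theorem sbe_inverse_general
    {X Y : Type*} [MetricSpace X] [MetricSpace Y]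
    (oX : X) (oY : Y) (L : ℝ) (hL : 1 ≤ L)
    (θ : ℝ → ℝ) (hθc : ConcaveOn ℝ (Set.Ici 0) θ) (hθm : Monotone θ)
    (hθ1 : ∀ r : ℝ, 1 ≤ θ r)
    (hθsub : Tendsto (fun r => θ r / r) atTop (nhds 0))
    (Φ : X → Y) (hΦ : IsSBE oX oY L θ Φ) :
    ∃ (Ψ : Y → X) (L' C n : ℝ) (θ' : ℝ → ℝ),
      0 < n ∧ 0 < C ∧ 1 ≤ L' ∧
      (∀ t : ℝ, 0 ≤ t → θ' t ≤ C * θ t) ∧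
      IsSBE oY oX L' θ' Ψ ∧
      (∀ x : X, dist x (Ψ (Φ x)) ≤ n * θ (dist x oX)) ∧
      (∀ y : Y, dist y (Φ (Ψ y)) ≤ n * θ (dist y oY)) := by
  have hθ0 : ∀ r, 0 ≤ θ r := fun r => zero_le_one.trans (hθ1 r)
  obtain ⟨Ψ, E, hE, hright⟩ := hΦ.exists_right_inverse fun r => one_pos.trans_le (hθ1 r)
  have hgΦ := hΦ.hasAffineGrowth hθm hθsub
  have hgΨ : HasAffineGrowth oY oX Ψ := hΦ.hasAffineGrowth_of_comp (by linarith) hθm hθsub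
    (.of_dist_apply_le hθm hθsub hE hright)
  obtain ⟨K₁, hK₁, hθΦ⟩ := hgΦ.exists_apply_le hθc hθm hθ1
  obtain ⟨K₂, hK₂, hθΨ⟩ := hgΨ.exists_apply_le hθc hθm hθ1
  obtain ⟨K₃, hK₃, hθΨΦ⟩ := (hgΨ.comp hgΦ).exists_apply_le hθc hθm hθ1
  set m := L * (E * K₁ + 1 + K₃)
  have hm : 0 ≤ m := by positivity
  have hleft := hΦ.dist_apply_comp_le (by linarith) hθm hθ0 hE hright hθΦ hθΨΦ
  obtain ⟨N, hN, hΨ⟩ := hΦ.exists_isSBE_of_inverse hL hθm hθ0 hE hK₂ hm hright hθΨ hleft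
  refine ⟨Ψ, L, N, m + E + 1, fun t => N * θ t, by positivity, by linarith, hL,
    fun _ _ => le_rfl, hΨ, fun x => (hleft x).trans ?_, fun y => ?_⟩
  · exact mul_le_mul_of_nonneg_right (by linarith) (hθ0 _)
  · rw [dist_comm]
    exact (hright y).trans (mul_le_mul_of_nonneg_right (by linarith) (hθ0 _))

/-- Every `(L,θ)`-SBE admits a coarse inverse which is itself an `(L',θ')`-SBE
with `θ' = O(θ)`, and which inverts `Φ` up to error `O(θ)`. -/
theorem sbe_inverse
    {X Y : Type*} [MetricSpace X] [MetricSpace Y] [ProperSpace X] [ProperSpace Y]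
    (hgX : IsGeodesicSpace X) (hgY : IsGeodesicSpace Y)
    (oX : X) (oY : Y) (L : ℝ) (hL : 1 ≤ L)
    (θ : ℝ → ℝ) (hθc : ConcaveOn ℝ (Set.Ici 0) θ) (hθm : Monotone θ)
    (hθ1 : ∀ r : ℝ, 1 ≤ θ r)
    (hθsub : Tendsto (fun r => θ r / r) atTop (nhds 0))
    (Φ : X → Y) (hΦ : IsSBE oX oY L θ Φ) :
    ∃ (Ψ : Y → X) (L' C n : ℝ) (θ' : ℝ → ℝ),
      0 < n ∧ 0 < C ∧ 1 ≤ L' ∧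
      (∀ t : ℝ, 0 ≤ t → θ' t ≤ C * θ t) ∧
      IsSBE oY oX L' θ' Ψ ∧
      (∀ x : X, dist x (Ψ (Φ x)) ≤ n * θ (dist x oX)) ∧
      (∀ y : Y, dist y (Φ (Ψ y)) ≤ n * θ (dist y oY)) :=
  sbe_inverse_general oX oY L hL θ hθc hθm hθ1 hθsub Φ hΦ
end

section
/- Let κ dominate θ (i.e., κ(t) ≥ C₁θ(t) + C₂ for large t). Let α and α' be (L,θ)-rays in a proper geodesic space X that κ-fellow travel each other (there exists n with d(α(t), α'(t)) ≤ n·κ(t) for all t). If α is κ-Morse, then α' is (2κ+θ)-Morse; in particular if κ dominates θ then α' is κ'-Morse for κ' = 2κ+θ which is comparable to κ. -/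
/-! A quasigeodesic ray `β` that sublinearly tracks `α'` also sublinearly tracks `α`: a point
`α' s` nearly closest to `β t` has `s = O(t)`, because an `(L,θ)`-ray with sublinear `θ` leaves
`o` at linear speed, so `α' s` is within `n κ(s) = o(t)` of `α s`. The Morse property of `α` then
puts `β t` within `m κ(‖β t‖)` of `α`, and the same estimate run from `α` back to `α'` costs only a
multiplicative constant, because concavity gives `κ(a r + b) ≤ C κ(r)`. -/

open Metric Set Filter

/-- `β` is a `(q,Q)`-quasigeodesic ray based at `o`. -/
def IsQGRay {X : Type*} [MetricSpace X] (o : X) (q Q : ℝ) (β : ℝ → X) : Prop :=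
  β 0 = o ∧ ∀ s t : ℝ, 0 ≤ s → 0 ≤ t →
    (1 / q) * |s - t| - Q ≤ dist (β s) (β t) ∧
    dist (β s) (β t) ≤ q * |s - t| + Q

/-- `Z` is `κ`-Morse with Morse gauge `m`: every quasigeodesic ray sublinearly
tracking `Z` lies in the `κ`-neighborhood of `Z` of gauge `m`. -/
def MorseGauge {X : Type*} [MetricSpace X] (o : X) (κ : ℝ → ℝ) (Z : Set X)
    (m : ℝ → ℝ → ℝ) : Prop :=
  ∀ q Q : ℝ, ∀ β : ℝ → X, IsQGRay o q Q β →
    Tendsto (fun t => infDist (β t) Z / t) atTop (nhds 0) →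
    ∀ t : ℝ, 0 ≤ t → infDist (β t) Z ≤ m q Q * κ (dist (β t) o)

/-- `Z` is `κ`-Morse. -/
def IsMorse {X : Type*} [MetricSpace X] (o : X) (κ : ℝ → ℝ) (Z : Set X) : Prop :=
  ∃ m : ℝ → ℝ → ℝ, MorseGauge o κ Z m

/-- `κ` dominates `θ`. -/
def Dominates (κ θ : ℝ → ℝ) : Prop :=
  ∃ C₁ > (0:ℝ), ∃ C₂ t₀ : ℝ, ∀ t : ℝ, t₀ < t → C₁ * θ t + C₂ ≤ κ t

section Concave

variable {κ : ℝ → ℝ}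

lemma ConcaveOn.apply_mul_le (hκ : ConcaveOn ℝ (Ici 0) κ) (h0 : 0 ≤ κ 0) {a x : ℝ}
    (ha : 1 ≤ a) (hx : 0 ≤ x) : κ (a * x) ≤ a * κ x := by
  have ha0 : 0 < a := one_pos.trans_le ha
  have key := hκ.2 (mem_Ici.2 (mul_nonneg ha0.le hx)) (mem_Ici.2 le_rfl)
    (inv_nonneg.2 ha0.le) (sub_nonneg.2 (inv_le_one_of_one_le₀ ha)) (add_sub_cancel _ _)
  simp only [smul_eq_mul, mul_zero, add_zero, inv_mul_cancel_left₀ ha0.ne'] at key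
  have h0' : 0 ≤ (1 - a⁻¹) * κ 0 := mul_nonneg (sub_nonneg.2 (inv_le_one_of_one_le₀ ha)) h0
  exact (inv_mul_le_iff₀ ha0).1 (by linarith)

lemma ConcaveOn.apply_le_mul_add_one (hκ : ConcaveOn ℝ (Ici 0) κ) (hκm : Monotone κ)
    (h0 : 0 ≤ κ 0) {d : ℝ} (hd : 0 ≤ d) : κ d ≤ κ 1 * (d + 1) := by
  have h1 : 0 ≤ κ 1 := h0.trans (hκm zero_le_one)
  calc κ d ≤ κ (max d 1 * 1) := hκm (by simp)
    _ ≤ max d 1 * κ 1 := hκ.apply_mul_le h0 (le_max_right d 1) zero_le_one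
    _ ≤ κ 1 * (d + 1) := by
        rw [mul_comm]; gcongr; exact max_le (by linarith) (by linarith [hd])

lemma ConcaveOn.apply_mul_add_le (hκ : ConcaveOn ℝ (Ici 0) κ) (hκm : Monotone κ)
    (hκ1 : ∀ r, 1 ≤ κ r) {a b d : ℝ} (ha : 0 ≤ a) (hb : 0 ≤ b) :
    κ (a * d + b) ≤ (a + b + 1) * κ 1 * κ d := by
  have hmax : a * d + b ≤ (a + b + 1) * max d 1 := by
    nlinarith [le_max_left d 1, le_max_right d 1]
  calc κ (a * d + b) ≤ κ ((a + b + 1) * max d 1) := hκm hmax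
    _ ≤ (a + b + 1) * κ (max d 1) :=
        hκ.apply_mul_le (zero_le_one.trans (hκ1 0)) (by linarith)
          (zero_le_one.trans (le_max_right d 1))
    _ ≤ (a + b + 1) * (κ 1 * κ d) := by
        gcongr
        rw [hκm.map_max]
        exact max_le (le_mul_of_one_le_left (by linarith [hκ1 d]) (hκ1 1))
          (le_mul_of_one_le_right (by linarith [hκ1 1]) (hκ1 d))
    _ = (a + b + 1) * κ 1 * κ d := by ring

end Concave

section FellowTravel

variable {X : Type*} [MetricSpace X] {o : X}

lemma IsRay.exists_le_two_mul_dist_add {L : ℝ} {θ : ℝ → ℝ} {γ : ℝ → X} (hγ : IsRay o L θ γ) (hL : 0 < L)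
    (hθ : Tendsto (fun r => θ r / r) atTop (nhds 0)) :
    ∃ s₀, 0 ≤ s₀ ∧ ∀ s, 0 ≤ s → s ≤ 2 * L * dist (γ s) o + s₀ := by
  obtain ⟨a, ha⟩ :=
    eventually_atTop.1 (hθ.eventually_lt_const (inv_pos.2 (mul_pos two_pos hL)))
  refine ⟨max a 1, by positivity, fun s hs => ?_⟩
  have hdist := dist_nonneg (x := γ s) (y := o)
  rcases le_or_gt s (max a 1) with h | h
  · nlinarith
  have hs0 : 0 < s := by linarith [le_max_right a 1]
  have hθs : θ s < (2 * L)⁻¹ * s := (div_lt_iff₀ hs0).1 (ha s (le_of_max_le_left h.le))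
  have hlow := (hγ.2 s 0 hs le_rfl).1
  rw [hγ.1, sub_zero, abs_of_nonneg hs, max_eq_left hs] at hlow
  have h2L : (0 : ℝ) < 2 * L := by positivity
  have hup : 2 * L * θ s < s := by
    calc 2 * L * θ s < 2 * L * ((2 * L)⁻¹ * s) := mul_lt_mul_of_pos_left hθs h2L
      _ = s := mul_inv_cancel_left₀ h2L.ne' s
  have hdown : 2 * L * (1 / L * s - θ s) ≤ 2 * L * dist (γ s) o :=
    mul_le_mul_of_nonneg_left hlow h2L.le
  have hLs : 2 * L * (1 / L * s) = 2 * s := by field_simp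
  linarith [le_max_right a 1]

lemma infDist_le_infDist_add_of_near {x : X} {S T : Set X} {δ : ℝ} (hS : S.Nonempty)
    (h : ∀ z ∈ S, dist x z ≤ infDist x S + 1 → infDist x T ≤ dist x z + δ) :
    infDist x T ≤ infDist x S + δ := by
  refine le_of_forall_pos_le_add fun ε hε => ?_
  obtain ⟨z, hz, hxz⟩ :=
    (infDist_lt_iff hS).1 (lt_add_of_pos_right (infDist x S) (lt_min hε one_pos))
  have := h z hz (by linarith [min_le_right ε 1])
  linarith [min_le_left ε 1]

variable {κ : ℝ → ℝ} {γ γ' : ℝ → X} {n A B : ℝ}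

lemma infDist_image_le_of_dist_le (hκm : Monotone κ) (hn : 0 ≤ n) (hA : 0 ≤ A)
    (hft : ∀ s, 0 ≤ s → dist (γ' s) (γ s) ≤ n * κ s)
    (hparam : ∀ s, 0 ≤ s → s ≤ A * dist (γ' s) o + B) (x : X) :
    infDist x (γ '' Ici 0) ≤
      infDist x (γ' '' Ici 0) + n * κ (A * (dist x o + infDist x (γ' '' Ici 0) + 1) + B) := by
  refine infDist_le_infDist_add_of_near ⟨γ' 0, 0, mem_Ici.2 le_rfl, rfl⟩ ?_
  rintro _ ⟨s, hs, rfl⟩ hnear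
  have hso : dist (γ' s) o ≤ dist x o + infDist x (γ' '' Ici 0) + 1 := by
    linarith [dist_triangle_left (γ' s) o x]
  calc infDist x (γ '' Ici 0) ≤ dist x (γ s) := infDist_le_dist_of_mem ⟨s, hs, rfl⟩
    _ ≤ dist x (γ' s) + dist (γ' s) (γ s) := dist_triangle _ _ _
    _ ≤ dist x (γ' s) + n * κ (A * (dist x o + infDist x (γ' '' Ici 0) + 1) + B) := by
        gcongr
        refine (hft s hs).trans (mul_le_mul_of_nonneg_left (hκm ?_) hn)
        linarith [hparam s hs, mul_le_mul_of_nonneg_left hso hA]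

lemma IsQGRay.dist_le {q Q : ℝ} {β : ℝ → X} (hβ : IsQGRay o q Q β) {t : ℝ} (ht : 0 ≤ t) :
    dist (β t) o ≤ |q| * t + |Q| := by
  have h := (hβ.2 t 0 ht le_rfl).2
  rw [hβ.1, sub_zero, abs_of_nonneg ht] at h
  nlinarith [le_abs_self q, le_abs_self Q]

lemma tendsto_infDist_div_of_dist_le (hκc : ConcaveOn ℝ (Ici 0) κ) (hκm : Monotone κ)
    (hκ1 : ∀ r, 1 ≤ κ r) (hκsub : Tendsto (fun r => κ r / r) atTop (nhds 0))
    (hn : 0 ≤ n) (hA : 0 ≤ A) (hB : 0 ≤ B) (hγ'0 : γ' 0 = o)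
    (hft : ∀ s, 0 ≤ s → dist (γ' s) (γ s) ≤ n * κ s)
    (hparam : ∀ s, 0 ≤ s → s ≤ A * dist (γ' s) o + B) {q Q : ℝ} {β : ℝ → X}
    (hβ : IsQGRay o q Q β)
    (htrack : Tendsto (fun t => infDist (β t) (γ' '' Ici 0) / t) atTop (nhds 0)) :
    Tendsto (fun t => infDist (β t) (γ '' Ici 0) / t) atTop (nhds 0) := by
  set a := A * (2 * |q|)
  set b := A * (2 * |Q| + 1) + B
  set C := n * ((a + b + 1) * κ 1)
  have hbound : ∀ t, 0 ≤ t →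
      infDist (β t) (γ '' Ici 0) ≤ infDist (β t) (γ' '' Ici 0) + C * κ t := by
    intro t ht
    have hinf : infDist (β t) (γ' '' Ici 0) ≤ dist (β t) o :=
      infDist_le_dist_of_mem ⟨0, mem_Ici.2 le_rfl, hγ'0⟩
    have harg : A * (dist (β t) o + infDist (β t) (γ' '' Ici 0) + 1) + B ≤ a * t + b := by
      nlinarith [hβ.dist_le ht]
    have hκt : κ (a * t + b) ≤ (a + b + 1) * κ 1 * κ t :=
      hκc.apply_mul_add_le hκm hκ1 (by positivity) (by positivity)
    have := mul_le_mul_of_nonneg_left ((hκm harg).trans hκt) hn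
    linarith [infDist_image_le_of_dist_le hκm hn hA hft hparam (β t)]
  have hlim : Tendsto (fun t => infDist (β t) (γ' '' Ici 0) / t + C * (κ t / t)) atTop
      (nhds 0) := by
    simpa using htrack.add (hκsub.const_mul C)
  refine squeeze_zero' ?_ ?_ hlim
  · filter_upwards [eventually_ge_atTop 0] with t ht using div_nonneg infDist_nonneg ht
  filter_upwards [eventually_gt_atTop 0] with t ht
  rw [mul_div_assoc', ← add_div]
  exact div_le_div_of_nonneg_right (hbound t ht.le) ht.le

lemma exists_infDist_le_mul_of_dist_le (hκc : ConcaveOn ℝ (Ici 0) κ) (hκm : Monotone κ)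
    (hκ1 : ∀ r, 1 ≤ κ r) (hn : 0 ≤ n) (hA : 0 ≤ A) (hB : 0 ≤ B)
    (hft : ∀ s, 0 ≤ s → dist (γ' s) (γ s) ≤ n * κ s)
    (hparam : ∀ s, 0 ≤ s → s ≤ A * dist (γ' s) o + B) {μ : ℝ} (hμ : 0 ≤ μ) :
    ∃ c, 0 ≤ c ∧ ∀ x : X, infDist x (γ' '' Ici 0) ≤ μ * κ (dist x o) →
      infDist x (γ '' Ici 0) ≤ c * κ (dist x o) := by
  have hκ0 : 0 ≤ κ 0 := zero_le_one.trans (hκ1 0)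
  have hκ1' : 0 ≤ κ 1 := zero_le_one.trans (hκ1 1)
  set a := A * (1 + μ * κ 1)
  set b := A * (μ * κ 1 + 1) + B
  refine ⟨μ + n * ((a + b + 1) * κ 1), by positivity, fun x hx => ?_⟩
  set d := dist x o
  have hlin : μ * κ d ≤ μ * (κ 1 * (d + 1)) :=
    mul_le_mul_of_nonneg_left (hκc.apply_le_mul_add_one hκm hκ0 dist_nonneg) hμ
  have harg : A * (d + infDist x (γ' '' Ici 0) + 1) + B ≤ a * d + b := by nlinarith
  have hκd : κ (a * d + b) ≤ (a + b + 1) * κ 1 * κ d :=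
    hκc.apply_mul_add_le hκm hκ1 (by positivity) (by positivity)
  have := mul_le_mul_of_nonneg_left ((hκm harg).trans hκd) hn
  linarith [infDist_image_le_of_dist_le hκm hn hA hft hparam x]

lemma MorseGauge.mono {κ' : ℝ → ℝ} {Z : Set X} {m : ℝ → ℝ → ℝ} (hm : MorseGauge o κ Z m)
    (hm0 : ∀ q Q, 0 ≤ m q Q) (hκ : ∀ r, κ r ≤ κ' r) : MorseGauge o κ' Z m :=
  fun q Q β hβ htrack t ht =>
    (hm q Q β hβ htrack t ht).trans (mul_le_mul_of_nonneg_left (hκ _) (hm0 q Q))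

lemma MorseGauge.exists_of_fellowTravel {m : ℝ → ℝ → ℝ} {B' : ℝ}
    (hm : MorseGauge o κ (γ '' Ici 0) m) (hκc : ConcaveOn ℝ (Ici 0) κ) (hκm : Monotone κ)
    (hκ1 : ∀ r, 1 ≤ κ r) (hκsub : Tendsto (fun r => κ r / r) atTop (nhds 0)) (hn : 0 ≤ n)
    (hA : 0 ≤ A) (hB : 0 ≤ B) (hB' : 0 ≤ B') (hγ'0 : γ' 0 = o)
    (hft : ∀ s, 0 ≤ s → dist (γ s) (γ' s) ≤ n * κ s)
    (hparam : ∀ s, 0 ≤ s → s ≤ A * dist (γ s) o + B)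
    (hparam' : ∀ s, 0 ≤ s → s ≤ A * dist (γ' s) o + B') :
    ∃ m', (∀ q Q, 0 ≤ m' q Q) ∧ MorseGauge o κ (γ' '' Ici 0) m' := by
  choose c hc0 hc using fun q Q =>
    exists_infDist_le_mul_of_dist_le hκc hκm hκ1 hn hA hB hft hparam (abs_nonneg (m q Q))
  have hft' : ∀ s, 0 ≤ s → dist (γ' s) (γ s) ≤ n * κ s := fun s hs =>
    dist_comm (γ s) _ ▸ hft s hs
  refine ⟨c, hc0, fun q Q β hβ htrack t ht => hc q Q _ ?_⟩
  have hγtrack :=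
    tendsto_infDist_div_of_dist_le hκc hκm hκ1 hκsub hn hA hB' hγ'0 hft' hparam' hβ htrack
  exact (hm q Q β hβ hγtrack t ht).trans
    (mul_le_mul_of_nonneg_right (le_abs_self _) (zero_le_one.trans (hκ1 _)))

end FellowTravel

theorem fellow_travel_morse_general
    {X : Type*} [MetricSpace X]
    (o : X) (L : ℝ) (hL : 1 ≤ L)
    (κ θ : ℝ → ℝ)
    (hκc : ConcaveOn ℝ (Set.Ici 0) κ) (hκm : Monotone κ) (hκ1 : ∀ r : ℝ, 1 ≤ κ r)
    (hκsub : Tendsto (fun r => κ r / r) atTop (nhds 0))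
    (hθ1 : ∀ r : ℝ, 1 ≤ θ r)
    (hθsub : Tendsto (fun r => θ r / r) atTop (nhds 0))
    (α α' : ℝ → X) (hα : IsRay o L θ α) (hα' : IsRay o L θ α')
    (n : ℝ) (hn : 0 < n)
    (hft : ∀ t : ℝ, 0 ≤ t → dist (α t) (α' t) ≤ n * κ t)
    (hmorse : IsMorse o κ (α '' Set.Ici 0)) :
    IsMorse o (fun t => 2 * κ t + θ t) (α' '' Set.Ici 0) := by
  obtain ⟨m, hm⟩ := hmorse
  have hL0 : 0 < L := by linarith
  obtain ⟨s₀, hs₀, hparam⟩ := hα.exists_le_two_mul_dist_add hL0 hθsub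
  obtain ⟨s₀', hs₀', hparam'⟩ := hα'.exists_le_two_mul_dist_add hL0 hθsub
  obtain ⟨m', hm'0, hm'⟩ := hm.exists_of_fellowTravel hκc hκm hκ1 hκsub hn.le (by positivity)
    hs₀ hs₀' hα'.1 hft hparam hparam'
  exact ⟨m', hm'.mono hm'0 fun r => by linarith [hκ1 r, hθ1 r]⟩

/-- If `α` and `α'` are `κ`-fellow travelling `(L,θ)`-rays and `α` is `κ`-Morse,
then `α'` is `(2κ+θ)`-Morse. -/
theorem fellow_travel_morse
    {X : Type*} [MetricSpace X] [ProperSpace X]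
    (o : X) (L : ℝ) (hL : 1 ≤ L)
    (κ θ : ℝ → ℝ)
    (hκc : ConcaveOn ℝ (Set.Ici 0) κ) (hκm : Monotone κ) (hκ1 : ∀ r : ℝ, 1 ≤ κ r)
    (hκsub : Tendsto (fun r => κ r / r) atTop (nhds 0))
    (hθc : ConcaveOn ℝ (Set.Ici 0) θ) (hθm : Monotone θ) (hθ1 : ∀ r : ℝ, 1 ≤ θ r)
    (hθsub : Tendsto (fun r => θ r / r) atTop (nhds 0))
    (hdom : Dominates κ θ)
    (α α' : ℝ → X) (hα : IsRay o L θ α) (hα' : IsRay o L θ α')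
    (n : ℝ) (hn : 0 < n)
    (hft : ∀ t : ℝ, 0 ≤ t → dist (α t) (α' t) ≤ n * κ t)
    (hmorse : IsMorse o κ (α '' Set.Ici 0)) :
    IsMorse o (fun t => 2 * κ t + θ t) (α' '' Set.Ici 0) :=
  fellow_travel_morse_general o L hL κ θ hκc hκm hκ1 hκsub hθ1 hθsub α α' hα hα' n hn hft hmorse
end

section
/- Let β be an (L,θ)-ray and a a geodesic ray, both based at 𝔬 in a proper geodesic metric space X. Suppose β ⊆ N_κ(a, m) for some function κ and constant m, i.e., d(β(t), a) ≤ m·κ(‖β(t)‖) for all t. Then a ⊆ N_{κ+θ}(β, m') for some constant m'; in particular, if κ dominates θ, then a ⊆ N_κ(β, m') for some m'. -/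
/-!
Project the integer points `β n` to parameters `u n` of the geodesic `a`, with
`d(β n, a (u n)) ≲ κ ‖β n‖`. Consecutive parameters differ by at most
`κ ‖β (n+1)‖ + L + θ (n+1) + κ ‖β n‖`, and `u n → ∞` because `‖β n‖` grows linearly in `n`.
So every `s` lies in some `[u n, u (n+1))`, which puts `a s` close to `β n`. Sublinearity of
`κ` and `θ` makes `n`, `‖β n‖` and `‖β (n+1)‖` at most linear in `s`, and concavity turns
`κ (c * s)` into at most `c * κ s`.
-/

open Metric Set Filter

lemma Monotone.exists_le_mul_add {f : ℝ → ℝ} (hf : Monotone f)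
    (hsub : Tendsto (fun r => f r / r) atTop (nhds 0)) {ε : ℝ} (hε : 0 < ε) :
    ∃ A, 0 ≤ A ∧ ∀ t, 0 ≤ t → f t ≤ ε * t + A := by
  obtain ⟨R, hR⟩ := eventually_atTop.mp ((hsub.eventually_lt_const hε).and (eventually_gt_atTop 0))
  refine ⟨|f R|, abs_nonneg _, fun t ht => ?_⟩
  rcases le_total t R with htR | hRt
  · nlinarith [hf htR, le_abs_self (f R)]
  · obtain ⟨hlt, hpos⟩ := hR t hRt
    have := (div_lt_iff₀ hpos).mp hlt
    linarith [abs_nonneg (f R)]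

lemma ConcaveOn.le_mul_of_le_mul {f : ℝ → ℝ} (hc : ConcaveOn ℝ (Ici 0) f) (hm : Monotone f)
    (h0 : 0 ≤ f 0) {c : ℝ} (hc1 : 1 ≤ c) {x s : ℝ} (hs : 0 ≤ s) (hx : x ≤ c * s) :
    f x ≤ c * f s := by
  have hc0 : 0 < c := by linarith
  -- `s = c⁻¹ • (c * s) + (1 - c⁻¹) • 0`
  have hconc := hc.2 (x := c * s) (y := 0) (by simp only [mem_Ici]; positivity) self_mem_Ici
    (inv_nonneg.mpr hc0.le) (sub_nonneg.mpr (inv_le_one_of_one_le₀ hc1)) (add_sub_cancel _ _)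
  simp only [smul_eq_mul, mul_zero, add_zero, inv_mul_cancel_left₀ hc0.ne'] at hconc
  have : c⁻¹ * f (c * s) ≤ f s := by nlinarith [inv_le_one_of_one_le₀ hc1]
  calc f x ≤ f (c * s) := hm hx
    _ = c * (c⁻¹ * f (c * s)) := by field_simp
    _ ≤ c * f s := by gcongr

lemma exists_le_and_lt_succ {α : Type*} [LinearOrder α] {u : ℕ → α} {s : α} (h0 : u 0 ≤ s) :
    ∀ {N : ℕ}, s < u N → ∃ n, u n ≤ s ∧ s < u (n + 1)
  | 0, h => absurd h0 (not_le.mpr h)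
  | N + 1, h => by
    by_cases hN : u N ≤ s
    · exact ⟨N, hN, h⟩
    · exact exists_le_and_lt_succ h0 (not_le.mp hN)

lemma exists_le_mul_of_eventually_le {g h : ℝ → ℝ} (hh : ∀ s, 1 ≤ h s)
    (hg : ∀ s, 0 ≤ s → g s ≤ s) {C : ℝ} (hC : ∀ᶠ s in atTop, g s ≤ C * h s) :
    ∃ m, ∀ s, 0 ≤ s → g s ≤ m * h s := by
  obtain ⟨S, hS⟩ := eventually_atTop.mp hC
  refine ⟨max C S, fun s hs => ?_⟩
  rcases le_total S s with hSs | hsS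
  · calc g s ≤ C * h s := hS s hSs
      _ ≤ max C S * h s := mul_le_mul_of_nonneg_right (le_max_left _ _) (by linarith [hh s])
  · calc g s ≤ S := (hg s hs).trans hsS
      _ ≤ max C S := le_max_right _ _
      _ ≤ max C S * h s := le_mul_of_one_le_right (by linarith [le_max_right C S]) (hh s)

lemma Dominates.exists_eventually_le_mul {κ θ : ℝ → ℝ} (h : Dominates κ θ) (hκ1 : ∀ r, 1 ≤ κ r) :
    ∃ K, ∀ᶠ t in atTop, θ t ≤ K * κ t := by
  obtain ⟨C₁, hC₁, C₂, t₀, hdom⟩ := h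
  refine ⟨(1 + |C₂|) / C₁, (eventually_gt_atTop t₀).mono fun t ht => ?_⟩
  rw [div_mul_eq_mul_div, le_div_iff₀ hC₁]
  nlinarith [hdom t ht, neg_le_abs C₂, abs_nonneg C₂, hκ1 t]

section Geodesic

variable {X : Type*} [MetricSpace X] {o : X} {a : ℝ → X}

lemma dist_basepoint_of_geodesic (ha0 : a 0 = o)
    (ha : ∀ s t : ℝ, 0 ≤ s → 0 ≤ t → dist (a s) (a t) = |s - t|) {v : ℝ} (hv : 0 ≤ v) :
    dist (a v) o = v := by
  rw [← ha0, ha v 0 hv le_rfl, sub_zero, abs_of_nonneg hv]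

lemma dist_basepoint_le_of_dist_le (ha0 : a 0 = o)
    (ha : ∀ s t : ℝ, 0 ≤ s → 0 ≤ t → dist (a s) (a t) = |s - t|) {x : X} {v B : ℝ}
    (hv : 0 ≤ v) (hx : dist x (a v) ≤ dist x o / 2 + B) : dist x o ≤ 2 * v + 2 * B := by
  have := dist_basepoint_of_geodesic ha0 ha hv ▸ dist_triangle x (a v) o
  linarith

lemma dist_geodesic_le_of_mem_Icc (ha : ∀ s t : ℝ, 0 ≤ s → 0 ≤ t → dist (a s) (a t) = |s - t|)
    {v s w : ℝ} (hv : 0 ≤ v) (hs : s ∈ Icc v w) (x y : X) :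
    dist (a s) x ≤ dist (a w) y + dist y x + 2 * dist x (a v) := by
  obtain ⟨hvs, hsw⟩ := hs
  have hs : dist (a s) (a v) = s - v := by
    rw [ha s v (hv.trans hvs) hv, abs_of_nonneg (sub_nonneg.mpr hvs)]
  have hw : dist (a w) (a v) = w - v := by
    rw [ha w v (hv.trans (hvs.trans hsw)) hv, abs_of_nonneg (by linarith)]
  linarith [dist_triangle (a s) (a v) x, dist_triangle4 (a w) y x (a v), dist_comm x (a v)]

lemma infDist_image_le_of_geodesic {β : ℝ → X} (hβ0 : β 0 = o) (ha0 : a 0 = o)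
    (ha : ∀ s t : ℝ, 0 ≤ s → 0 ≤ t → dist (a s) (a t) = |s - t|) {s : ℝ} (hs : 0 ≤ s) :
    infDist (a s) (β '' Ici 0) ≤ s :=
  calc infDist (a s) (β '' Ici 0) ≤ dist (a s) (β 0) := infDist_le_dist_of_mem ⟨0, self_mem_Ici, rfl⟩
    _ = s := by rw [hβ0, dist_basepoint_of_geodesic ha0 ha hs]

end Geodesic

namespace IsRay

variable {X : Type*} [MetricSpace X] {o : X} {L : ℝ} {θ : ℝ → ℝ} {β : ℝ → X}

lemma sub_le_dist_basepoint (hβ : IsRay o L θ β) {t : ℝ} (ht : 0 ≤ t) :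
    t / L - θ t ≤ dist (β t) o := by
  simpa [hβ.1, abs_of_nonneg ht, max_eq_left ht, div_eq_inv_mul] using (hβ.2 t 0 ht le_rfl).1

lemma dist_basepoint_le (hβ : IsRay o L θ β) {t : ℝ} (ht : 0 ≤ t) :
    dist (β t) o ≤ L * t + θ t := by
  simpa [hβ.1, abs_of_nonneg ht, max_eq_left ht] using (hβ.2 t 0 ht le_rfl).2

lemma dist_add_one_le (hβ : IsRay o L θ β) {t : ℝ} (ht : 0 ≤ t) :
    dist (β (t + 1)) (β t) ≤ L + θ (t + 1) := by
  simpa [max_eq_left (by linarith : t ≤ t + 1)] using (hβ.2 (t + 1) t (by linarith) ht).2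

end IsRay

section Projection

variable {X : Type*} [MetricSpace X] {o : X} {L M : ℝ} {κ θ : ℝ → ℝ} {β a : ℝ → X}

lemma IsRay.le_mul_dist_basepoint_add (hL : 0 < L) (hβ : IsRay o L θ β) {A : ℝ}
    (hA : ∀ t, 0 ≤ t → θ t ≤ 1 / (2 * L) * t + A) {t : ℝ} (ht : 0 ≤ t) :
    t ≤ 2 * L * (dist (β t) o + A) := by
  have h := hβ.sub_le_dist_basepoint ht
  have hA := hA t ht
  have e : t / L - 1 / (2 * L) * t = t / (2 * L) := by field_simp; ring
  have : t / (2 * L) ≤ dist (β t) o + A := by linarith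
  rwa [div_le_iff₀ (by positivity), mul_comm] at this

lemma exists_linear_bound_of_projection (hL : 1 ≤ L) (hκm : Monotone κ)
    (hκsub : Tendsto (fun r => κ r / r) atTop (nhds 0)) (hθm : Monotone θ)
    (hθsub : Tendsto (fun r => θ r / r) atTop (nhds 0)) (hβ : IsRay o L θ β) (ha0 : a 0 = o)
    (ha : ∀ s t : ℝ, 0 ≤ s → 0 ≤ t → dist (a s) (a t) = |s - t|) (hM : 0 < M) {u : ℕ → ℝ}
    (hu0 : ∀ n, 0 ≤ u n) (hu : ∀ n : ℕ, dist (β n) (a (u n)) ≤ M * κ (dist (β n) o)) :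
    ∃ c, 1 ≤ c ∧ ∀ s, 1 ≤ s → ∀ n : ℕ, u n ≤ s →
      (n : ℝ) + 1 ≤ c * s ∧ dist (β n) o ≤ c * s ∧ dist (β (n + 1)) o ≤ c * s := by
  have hL0 : 0 < L := by linarith
  obtain ⟨A, hA0, hA⟩ := hθm.exists_le_mul_add hθsub (ε := 1 / (2 * L)) (by positivity)
  obtain ⟨B, hB0, hB⟩ := hκm.exists_le_mul_add hκsub (ε := 1 / (2 * M)) (by positivity)
  have hproj : ∀ n : ℕ, dist (β n) o ≤ 2 * u n + 2 * (M * B) := fun n =>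
    dist_basepoint_le_of_dist_le ha0 ha (hu0 n) <| (hu n).trans <|
      calc M * κ (dist (β n) o) ≤ M * (1 / (2 * M) * dist (β n) o + B) := by
            gcongr; exact hB _ dist_nonneg
        _ = dist (β n) o / 2 + M * B := by field_simp
  have hθle : ∀ t, 0 ≤ t → θ t ≤ t + A := fun t ht => by
    have : 1 / (2 * L) ≤ 1 := by rw [div_le_one (by positivity)]; linarith
    nlinarith [hA t ht]
  set D := 2 * L * (2 * (M * B) + A) + 1
  have hD : 0 ≤ D := by positivity
  refine ⟨(L + 1) * (4 * L + D) + A, by nlinarith, fun s hs n hns => ?_⟩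
  have hn : (n : ℝ) + 1 ≤ (4 * L + D) * s := by
    nlinarith [hβ.le_mul_dist_basepoint_add hL0 hA n.cast_nonneg, hproj n]
  have hrn : dist (β n) o ≤ (4 * L + D) * s := by nlinarith [hproj n]
  have hrn1 : dist (β (n + 1)) o ≤ (L + 1) * (n + 1) + A := by
    nlinarith [hβ.dist_basepoint_le (t := n + 1) (by positivity), hθle (n + 1) (by positivity)]
  refine ⟨by nlinarith, by nlinarith, by nlinarith⟩

theorem eventually_infDist_le_of_subset_neighborhood (hL : 1 ≤ L)
    (hκc : ConcaveOn ℝ (Ici 0) κ) (hκm : Monotone κ) (hκ1 : ∀ r, 1 ≤ κ r)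
    (hκsub : Tendsto (fun r => κ r / r) atTop (nhds 0))
    (hθc : ConcaveOn ℝ (Ici 0) θ) (hθm : Monotone θ) (hθ1 : ∀ r, 1 ≤ θ r)
    (hθsub : Tendsto (fun r => θ r / r) atTop (nhds 0)) (hβ : IsRay o L θ β) (ha0 : a 0 = o)
    (ha : ∀ s t : ℝ, 0 ≤ s → 0 ≤ t → dist (a s) (a t) = |s - t|) {m : ℝ}
    (hsub : ∀ t, 0 ≤ t → infDist (β t) (a '' Ici 0) ≤ m * κ (dist (β t) o)) :
    ∃ C, 0 ≤ C ∧ ∀ᶠ s in atTop, infDist (a s) (β '' Ici 0) ≤ C * (κ s + θ s) := by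
  -- `infDist` need not be attained, so project within the strictly larger radius `M * κ`.
  set M := |m| + 1
  have hM : 0 < M := by positivity
  have hproj : ∀ n : ℕ, ∃ v, 0 ≤ v ∧ dist (β n) (a v) < M * κ (dist (β n) o) := fun n => by
    have hlt : infDist (β n) (a '' Ici 0) < M * κ (dist (β n) o) :=
      (hsub n n.cast_nonneg).trans_lt <| by nlinarith [le_abs_self m, hκ1 (dist (β n) o)]
    obtain ⟨_, ⟨v, hv, rfl⟩, hd⟩ := (infDist_lt_iff ⟨a 0, mem_image_of_mem a self_mem_Ici⟩).mp hlt
    exact ⟨v, hv, hd⟩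
  choose u hu0 hu using hproj
  obtain ⟨c, hc1, hc⟩ := exists_linear_bound_of_projection hL hκm hκsub hθm hθsub hβ ha0 ha hM
    hu0 fun n => (hu n).le
  have hκ0 : 0 ≤ κ 0 := by linarith [hκ1 0]
  have hθ0 : 0 ≤ θ 0 := by linarith [hθ1 0]
  refine ⟨3 * M * c + L + c, by positivity, ?_⟩
  filter_upwards [eventually_ge_atTop (max 1 (u 0))] with s hs
  have hs1 : 1 ≤ s := le_of_max_le_left hs
  have hs0 : 0 ≤ s := by linarith
  -- `u n ≤ s` forces `n + 1 ≤ c * s`, so `u` must pass `s` before `⌈c * s⌉₊`.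
  obtain ⟨n, hns, hsn⟩ : ∃ n, u n ≤ s ∧ s < u (n + 1) := by
    refine exists_le_and_lt_succ (le_of_max_le_right hs) (N := ⌈c * s⌉₊) (not_le.mp fun h => ?_)
    linarith [(hc s hs1 _ h).1, Nat.le_ceil (c * s)]
  obtain ⟨hn, hrn, hrn1⟩ := hc s hs1 n hns
  have hun1 := (hu (n + 1)).le
  push_cast at hun1
  calc infDist (a s) (β '' Ici 0) ≤ dist (a s) (β n) :=
        infDist_le_dist_of_mem ⟨n, mem_Ici.mpr n.cast_nonneg, rfl⟩
    _ ≤ dist (a (u (n + 1))) (β (n + 1)) + dist (β (n + 1)) (β n) + 2 * dist (β n) (a (u n)) :=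
        dist_geodesic_le_of_mem_Icc ha (hu0 n) ⟨hns, hsn.le⟩ _ _
    _ ≤ M * κ (dist (β (n + 1)) o) + (L + θ (n + 1)) + 2 * (M * κ (dist (β n) o)) := by
        gcongr
        · rw [dist_comm]; exact hun1
        · exact hβ.dist_add_one_le n.cast_nonneg
        · exact (hu n).le
    _ ≤ M * (c * κ s) + (L * κ s + c * θ s) + 2 * (M * (c * κ s)) := by
        gcongr
        · exact hκc.le_mul_of_le_mul hκm hκ0 hc1 hs0 hrn1
        · exact le_mul_of_one_le_right (by linarith) (hκ1 s)
        · exact hθc.le_mul_of_le_mul hθm hθ0 hc1 hs0 hn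
        · exact hκc.le_mul_of_le_mul hκm hκ0 hc1 hs0 hrn
    _ ≤ (3 * M * c + L + c) * (κ s + θ s) := by
        nlinarith [hκ1 s, hθ1 s, mul_pos hM (by linarith : (0:ℝ) < c)]

end Projection

theorem symmetry_of_neighborhoods_general
    {X : Type*} [MetricSpace X]
    (o : X) (L : ℝ) (hL : 1 ≤ L)
    (κ θ : ℝ → ℝ)
    (hκc : ConcaveOn ℝ (Set.Ici 0) κ) (hκm : Monotone κ) (hκ1 : ∀ r : ℝ, 1 ≤ κ r)
    (hκsub : Tendsto (fun r => κ r / r) atTop (nhds 0))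
    (hθc : ConcaveOn ℝ (Set.Ici 0) θ) (hθm : Monotone θ) (hθ1 : ∀ r : ℝ, 1 ≤ θ r)
    (hθsub : Tendsto (fun r => θ r / r) atTop (nhds 0))
    (β : ℝ → X) (hβ : IsRay o L θ β)
    (a : ℝ → X) (ha0 : a 0 = o)
    (ha : ∀ s t : ℝ, 0 ≤ s → 0 ≤ t → dist (a s) (a t) = |s - t|)
    (m : ℝ)
    (hsub : ∀ t : ℝ, 0 ≤ t →
      infDist (β t) (a '' Set.Ici 0) ≤ m * κ (dist (β t) o)) :
    (∃ m' : ℝ, ∀ s : ℝ, 0 ≤ s →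
      infDist (a s) (β '' Set.Ici 0) ≤ m' * (κ s + θ s)) ∧
    (Dominates κ θ → ∃ m'' : ℝ, ∀ s : ℝ, 0 ≤ s →
      infDist (a s) (β '' Set.Ici 0) ≤ m'' * κ s) := by
  obtain ⟨C, hC0, hC⟩ := eventually_infDist_le_of_subset_neighborhood hL hκc hκm hκ1 hκsub
    hθc hθm hθ1 hθsub hβ ha0 ha hsub
  have hnear : ∀ s, 0 ≤ s → infDist (a s) (β '' Ici 0) ≤ s := fun _ hs =>
    infDist_image_le_of_geodesic hβ.1 ha0 ha hs
  refine ⟨exists_le_mul_of_eventually_le (fun s => by linarith [hκ1 s, hθ1 s]) hnear hC,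
    fun hdom => ?_⟩
  obtain ⟨K, hK⟩ := hdom.exists_eventually_le_mul hκ1
  refine exists_le_mul_of_eventually_le hκ1 hnear (C := C * (1 + K)) ?_
  filter_upwards [hC, hK] with s hCs hKs
  calc infDist (a s) (β '' Ici 0) ≤ C * (κ s + θ s) := hCs
    _ ≤ C * ((1 + K) * κ s) := by gcongr; linarith
    _ = C * (1 + K) * κ s := by ring

/-- If an `(L,θ)`-ray `β` lies in the `κ`-neighborhood `N_κ(a, m)` of a geodesic
ray `a` from the same basepoint, then `a` lies in `N_{κ+θ}(β, m')` for some
constant `m'`; in particular, if `κ` dominates `θ`, then `a ⊆ N_κ(β, m'')`. -/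
theorem symmetry_of_neighborhoods
    {X : Type*} [MetricSpace X] [ProperSpace X]
    (o : X) (L : ℝ) (hL : 1 ≤ L)
    (κ θ : ℝ → ℝ)
    (hκc : ConcaveOn ℝ (Set.Ici 0) κ) (hκm : Monotone κ) (hκ1 : ∀ r : ℝ, 1 ≤ κ r)
    (hκsub : Tendsto (fun r => κ r / r) atTop (nhds 0))
    (hθc : ConcaveOn ℝ (Set.Ici 0) θ) (hθm : Monotone θ) (hθ1 : ∀ r : ℝ, 1 ≤ θ r)
    (hθsub : Tendsto (fun r => θ r / r) atTop (nhds 0))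
    (β : ℝ → X) (hβ : IsRay o L θ β)
    (a : ℝ → X) (ha0 : a 0 = o)
    (ha : ∀ s t : ℝ, 0 ≤ s → 0 ≤ t → dist (a s) (a t) = |s - t|)
    (m : ℝ)
    (hsub : ∀ t : ℝ, 0 ≤ t →
      infDist (β t) (a '' Set.Ici 0) ≤ m * κ (dist (β t) o)) :
    (∃ m' : ℝ, ∀ s : ℝ, 0 ≤ s →
      infDist (a s) (β '' Set.Ici 0) ≤ m' * (κ s + θ s)) ∧
    (Dominates κ θ → ∃ m'' : ℝ, ∀ s : ℝ, 0 ≤ s →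
      infDist (a s) (β '' Set.Ici 0) ≤ m'' * κ s) :=
  symmetry_of_neighborhoods_general o L hL κ θ hκc hκm hκ1 hκsub hθc hθm hθ1 hθsub β hβ a ha0 ha m
    hsub
end

section
/- Let Φ : X → Y be an (L,θ)-SBE between proper geodesic pointed metric spaces, and let κ dominate θ. If α and β are quasigeodesic rays in X that κ-fellow travel each other (∃n: d(α(t),β(t)) ≤ n·κ(t) for all t), then Φ∘α and Φ∘β κ-fellow travel each other in Y: there exists n' (depending on n, L, and the domination constants) with d(Φα(t), Φβ(t)) ≤ n'·κ(t) for all t. -/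
open Metric Set Filter

/-!
The upper SBE bound gives `d(Φ α(t), Φ β(t)) ≤ L·d(α(t), β(t)) + θ(max ‖α(t)‖ ‖β(t)‖)`. The first
term is at most `L n κ(t)` by hypothesis. Since quasigeodesic rays leave the base point at most
linearly, the second is `θ` of an affine function of `t`; domination turns it into `κ` of an affine
function of `t` up to constants, and concavity of `κ` together with `κ ≥ 1` bounds this by a multiple
of `κ(t)`.
-/

lemma ConcaveOn.map_mul_le_mul {f : ℝ → ℝ} (hf : ConcaveOn ℝ (Ici 0) f) (hf0 : 0 ≤ f 0)
    {c x : ℝ} (hc : 1 ≤ c) (hx : 0 ≤ x) : f (c * x) ≤ c * f x := by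
  have hc0 : 0 < c := one_pos.trans_le hc
  have hconv := hf.2 (mem_Ici.2 (mul_nonneg hc0.le hx)) (mem_Ici.2 le_rfl)
    (inv_nonneg.2 hc0.le) (sub_nonneg.2 (inv_le_one_of_one_le₀ hc)) (add_sub_cancel _ _)
  have hx_eq : c⁻¹ • (c * x) + (1 - c⁻¹) • (0 : ℝ) = x := by
    simp [inv_mul_cancel_left₀ hc0.ne']
  rw [hx_eq, smul_eq_mul, smul_eq_mul] at hconv
  have hrest : 0 ≤ (1 - c⁻¹) * f 0 := mul_nonneg (sub_nonneg.2 (inv_le_one_of_one_le₀ hc)) hf0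
  have : c⁻¹ * f (c * x) ≤ f x := by linarith
  rwa [inv_mul_le_iff₀ hc0] at this

lemma ConcaveOn.exists_map_affine_le_mul {κ : ℝ → ℝ} (hκc : ConcaveOn ℝ (Ici 0) κ) (hκm : Monotone κ)
    (hκ1 : ∀ r, 1 ≤ κ r) (a b : ℝ) : ∃ c ≥ 0, ∀ t, 0 ≤ t → κ (a * t + b) ≤ c * κ t := by
  set E := |a| + |b| + 1
  have hE : 1 ≤ E := le_add_of_nonneg_left (by positivity)
  refine ⟨E * κ 1, mul_nonneg (by positivity) (zero_le_one.trans (hκ1 1)), fun t ht => ?_⟩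
  have hlin : a * t + b ≤ E * max t 1 := by
    have h1 : a * t ≤ |a| * max t 1 :=
      (le_abs_self _).trans (by rw [abs_mul, abs_of_nonneg ht]; gcongr; exact le_max_left _ _)
    have h2 : b ≤ |b| * max t 1 :=
      (le_abs_self b).trans (le_mul_of_one_le_right (abs_nonneg b) (le_max_right _ _))
    nlinarith [le_max_right t 1]
  have hmax : κ (max t 1) ≤ κ 1 * κ t := by
    rw [hκm.map_max]
    exact max_le (le_mul_of_one_le_left (zero_le_one.trans (hκ1 t)) (hκ1 1))
      (le_mul_of_one_le_right (zero_le_one.trans (hκ1 1)) (hκ1 t))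
  calc κ (a * t + b) ≤ κ (E * max t 1) := hκm hlin
    _ ≤ E * κ (max t 1) :=
        hκc.map_mul_le_mul (zero_le_one.trans (hκ1 0)) hE (ht.trans (le_max_left _ _))
    _ ≤ E * (κ 1 * κ t) := by gcongr
    _ = E * κ 1 * κ t := by ring

lemma Dominates.exists_le_mul_add {κ θ : ℝ → ℝ} (h : Dominates κ θ) (hθ : Monotone θ)
    (hκ : ∀ r, 0 ≤ κ r) : ∃ A ≥ 0, ∃ B, ∀ s, θ s ≤ A * κ s + B := by
  obtain ⟨C₁, hC₁, C₂, t₀, hdom⟩ := h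
  refine ⟨C₁⁻¹, inv_nonneg.2 hC₁.le, max (θ t₀) (-C₂ / C₁), fun s => ?_⟩
  rcases le_or_gt s t₀ with hs | hs
  · have := mul_nonneg (inv_nonneg.2 hC₁.le) (hκ s)
    linarith [hθ hs, le_max_left (θ t₀) (-C₂ / C₁)]
  · have : θ s ≤ C₁⁻¹ * κ s + -C₂ / C₁ := by
      refine le_of_mul_le_mul_left ?_ hC₁
      field_simp
      linarith [hdom s hs]
    linarith [le_max_right (θ t₀) (-C₂ / C₁)]

lemma Dominates.exists_comp_affine_le_mul {κ θ : ℝ → ℝ} (h : Dominates κ θ) (hθ : Monotone θ)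
    (hκc : ConcaveOn ℝ (Ici 0) κ) (hκm : Monotone κ) (hκ1 : ∀ r, 1 ≤ κ r) (a b : ℝ) :
    ∃ c ≥ 0, ∀ t, 0 ≤ t → θ (a * t + b) ≤ c * κ t := by
  obtain ⟨A, hA, B, hAB⟩ := h.exists_le_mul_add hθ fun r => zero_le_one.trans (hκ1 r)
  obtain ⟨c, hc, hκaff⟩ := hκc.exists_map_affine_le_mul hκm hκ1 a b
  refine ⟨A * c + |B|, by positivity, fun t ht => ?_⟩
  calc θ (a * t + b) ≤ A * κ (a * t + b) + B := hAB _
    _ ≤ A * (c * κ t) + |B| * κ t := by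
        gcongr
        · exact hκaff t ht
        · exact (le_abs_self B).trans (le_mul_of_one_le_right (abs_nonneg B) (hκ1 t))
    _ = (A * c + |B|) * κ t := by ring

lemma IsQGRay.dist_base_le {X : Type*} [MetricSpace X] {o : X} {q Q : ℝ} {β : ℝ → X}
    (h : IsQGRay o q Q β) {t : ℝ} (ht : 0 ≤ t) : dist (β t) o ≤ q * t + Q := by
  simpa [h.1, abs_of_nonneg ht] using (h.2 t 0 ht le_rfl).2

theorem sbe_preserves_fellow_travel_general
    {X Y : Type*} [MetricSpace X] [MetricSpace Y]
    (oX : X) (oY : Y) (L : ℝ) (hL : 1 ≤ L)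
    (κ θ : ℝ → ℝ)
    (hκc : ConcaveOn ℝ (Set.Ici 0) κ) (hκm : Monotone κ) (hκ1 : ∀ r : ℝ, 1 ≤ κ r)
    (hθm : Monotone θ)
    (hdom : Dominates κ θ)
    (Φ : X → Y) (hΦ : IsSBE oX oY L θ Φ)
    (q Q q' Q' : ℝ) (α β : ℝ → X)
    (hα : IsQGRay oX q Q α) (hβ : IsQGRay oX q' Q' β)
    (n : ℝ) (hn : 0 < n)
    (hft : ∀ t : ℝ, 0 ≤ t → dist (α t) (β t) ≤ n * κ t) :
    ∃ n' > (0:ℝ), ∀ t : ℝ, 0 ≤ t → dist (Φ (α t)) (Φ (β t)) ≤ n' * κ t := by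
  obtain ⟨c, hc, hθκ⟩ :=
    hdom.exists_comp_affine_le_mul hθm hκc hκm hκ1 (max q q') (max Q Q')
  refine ⟨L * n + c, by positivity, fun t ht => ?_⟩
  have hnorm : max (dist (α t) oX) (dist (β t) oX) ≤ max q q' * t + max Q Q' := by
    refine max_le ((hα.dist_base_le ht).trans ?_) ((hβ.dist_base_le ht).trans ?_) <;>
      gcongr <;> simp
  calc dist (Φ (α t)) (Φ (β t))
      ≤ L * dist (α t) (β t) + θ (max (dist (α t) oX) (dist (β t) oX)) := (hΦ.1 _ _).2
    _ ≤ L * (n * κ t) + c * κ t := by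
        gcongr
        · exact hft t ht
        · exact (hθm hnorm).trans (hθκ t ht)
    _ = (L * n + c) * κ t := by ring

/-- An SBE preserves `κ`-fellow travelling of quasigeodesic rays, when `κ`
dominates `θ`. -/
theorem sbe_preserves_fellow_travel
    {X Y : Type*} [MetricSpace X] [MetricSpace Y] [ProperSpace X] [ProperSpace Y]
    (oX : X) (oY : Y) (L : ℝ) (hL : 1 ≤ L)
    (κ θ : ℝ → ℝ)
    (hκc : ConcaveOn ℝ (Set.Ici 0) κ) (hκm : Monotone κ) (hκ1 : ∀ r : ℝ, 1 ≤ κ r)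
    (hκsub : Tendsto (fun r => κ r / r) atTop (nhds 0))
    (hθc : ConcaveOn ℝ (Set.Ici 0) θ) (hθm : Monotone θ) (hθ1 : ∀ r : ℝ, 1 ≤ θ r)
    (hθsub : Tendsto (fun r => θ r / r) atTop (nhds 0))
    (hdom : Dominates κ θ)
    (Φ : X → Y) (hΦ : IsSBE oX oY L θ Φ)
    (q Q q' Q' : ℝ) (α β : ℝ → X)
    (hα : IsQGRay oX q Q α) (hβ : IsQGRay oX q' Q' β)
    (n : ℝ) (hn : 0 < n)
    (hft : ∀ t : ℝ, 0 ≤ t → dist (α t) (β t) ≤ n * κ t) :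
    ∃ n' > (0:ℝ), ∀ t : ℝ, 0 ≤ t → dist (Φ (α t)) (Φ (β t)) ≤ n' * κ t :=
  sbe_preserves_fellow_travel_general oX oY L hL κ θ hκc hκm hκ1 hθm hdom Φ hΦ q Q q' Q' α β hα hβ n
    hn hft
end

section
/- Let X be a proper geodesic metric space, 𝔬 a basepoint, and α : [0,∞) → X a map such that for every r > 0 the geodesic segments [𝔬, α(i)] (i ∈ ℕ) eventually lie, within the ball B(𝔬, r), in the set N = N_κ(α, m) for a fixed constant m. Then there exists a geodesic ray a from 𝔬, obtained as a locally uniform limit of a subsequence of the segments [𝔬, α(i)], and this ray satisfies a ⊆ N_κ(α, m). -/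
/-!
Clamp each segment `g i` to a 1-Lipschitz map `ℝ → X` sending `0` to `𝔬`. In a proper space
these maps form a compact subset of `C(ℝ, X)` (Arzelà–Ascoli), whose topology is that of locally
uniform convergence and is metrizable, so a subsequence converges. The segments eventually agree
with their clampings on every bounded part of `[0, ∞)`, so the limit is an isometric ray. The bound
on `infDist` at the point at distance `t` from `𝔬` passes to the limit since `infDist` is
continuous.
-/

open Metric Set Filter Topology NNReal

theorem isCompact_setOf_lipschitzWith_apply_eq {Y X : Type*} [PseudoMetricSpace Y] [MetricSpace X]
    [ProperSpace X] (K : ℝ≥0) (y₀ : Y) (o : X) :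
    IsCompact {f : C(Y, X) | LipschitzWith K f ∧ f y₀ = o} := by
  refine ArzelaAscoli.isCompact_of_equicontinuous _ ?_ ?_
  · have himage : ContinuousMap.toFun '' {f : C(Y, X) | LipschitzWith K f ∧ f y₀ = o} =
        {f : Y → X | LipschitzWith K f ∧ f y₀ = o} := by
      ext f
      exact ⟨fun ⟨F, hF, hFf⟩ => hFf ▸ hF, fun hf => ⟨⟨f, hf.1.continuous⟩, hf, rfl⟩⟩
    rw [himage]
    refine (isCompact_univ_pi fun y => isCompact_closedBall o (K * dist y y₀)).of_isClosed_subset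
      ((isClosed_setOfPred_lipschitzWith K).inter
        (isClosed_eq (continuous_apply y₀) continuous_const)) ?_
    rintro f ⟨hf, hf₀⟩ y -
    rw [mem_closedBall, ← hf₀]
    exact hf.dist_le_mul y y₀
  · exact (LipschitzWith.uniformEquicontinuous _ K fun f => f.2.1).equicontinuous

theorem exists_subseq_tendstoLocallyUniformly_of_lipschitzWith {Y X : Type*}
    [PseudoMetricSpace Y] [ProperSpace Y] [MetricSpace X] [ProperSpace X] {K : ℝ≥0} {y₀ : Y}
    {o : X} (F : ℕ → Y → X) (hF : ∀ n, LipschitzWith K (F n)) (hF₀ : ∀ n, F n y₀ = o) :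
    ∃ a : Y → X, ∃ φ : ℕ → ℕ, StrictMono φ ∧
      TendstoLocallyUniformly (fun n => F (φ n)) a atTop := by
  obtain ⟨a, -, φ, hφ, ha⟩ := (isCompact_setOf_lipschitzWith_apply_eq K y₀ o).tendsto_subseq
    (x := fun n => ⟨F n, (hF n).continuous⟩) fun n => ⟨hF n, hF₀ n⟩
  exact ⟨a, φ, hφ, ContinuousMap.tendsto_iff_tendstoLocallyUniformly.1 ha⟩

theorem TendstoLocallyUniformlyOn.congr_eventually {ι α β : Type*} [TopologicalSpace α]
    [UniformSpace β] {F G : ι → α → β} {f : α → β} {p : Filter ι} {s : Set α}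
    (hf : TendstoLocallyUniformlyOn F f p s)
    (hFG : ∀ x ∈ s, ∀ᶠ ny : ι × α in p ×ˢ 𝓝[s] x, F ny.1 ny.2 = G ny.1 ny.2) :
    TendstoLocallyUniformlyOn G f p s := by
  rw [tendstoLocallyUniformlyOn_iff_filter] at hf ⊢
  exact fun x hx => (hf x hx).congr (hFG x hx)

section GeodesicSegments

variable {X : Type*} {o : X} {g : ℕ → ℝ → X} {L : ℕ → ℝ}

theorem exists_subseq_tendstoLocallyUniformlyOn_Ici [MetricSpace X] [ProperSpace X]
    (hg₀ : ∀ n, g n 0 = o) (hL₀ : ∀ n, 0 ≤ L n)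
    (hg : ∀ n, ∀ s t, s ∈ Icc 0 (L n) → t ∈ Icc 0 (L n) → dist (g n s) (g n t) = |s - t|)
    (hL : Tendsto L atTop atTop) :
    ∃ a : ℝ → X, ∃ φ : ℕ → ℕ, StrictMono φ ∧
      TendstoLocallyUniformlyOn (fun n => g (φ n)) a atTop (Ici 0) := by
  set G : ℕ → ℝ → X := fun n => IccExtend (hL₀ n) ((Icc 0 (L n)).domRestrict (g n))
  have hG_eq : ∀ n, ∀ t ∈ Icc 0 (L n), G n t = g n t := fun n t ht => IccExtend_of_mem _ _ ht
  have hG : ∀ n, LipschitzWith 1 (G n) := fun n => by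
    have hiso : Isometry ((Icc 0 (L n)).domRestrict (g n)) :=
      Isometry.of_dist_eq fun s t => (hg n s t s.2 t.2).trans (Real.dist_eq s t).symm
    have := hiso.lipschitz.comp (LipschitzWith.projIcc (hL₀ n))
    rwa [one_mul] at this
  obtain ⟨a, φ, hφ, ha⟩ := exists_subseq_tendstoLocallyUniformly_of_lipschitzWith G hG
    fun n => (hG_eq n 0 ⟨le_rfl, hL₀ n⟩).trans (hg₀ n)
  refine ⟨a, φ, hφ, ha.tendstoLocallyUniformlyOn.congr_eventually fun x _ => ?_⟩
  have hnear : ∀ᶠ y in 𝓝[Ici 0] x, y ∈ Ici 0 ∧ y < x + 1 :=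
    eventually_mem_nhdsWithin.and (nhdsWithin_le_nhds (eventually_lt_nhds (lt_add_one x)))
  filter_upwards [((hL.comp hφ.tendsto_atTop).eventually_ge_atTop (x + 1)).prod_mk hnear]
    with ⟨n, y⟩ ⟨hn, hy₀, hy⟩
  exact hG_eq _ _ ⟨hy₀, hy.le.trans hn⟩

theorem dist_eq_abs_sub_of_tendsto [PseudoMetricSpace X] {a : ℝ → X}
    (hL : Tendsto L atTop atTop)
    (hg : ∀ n, ∀ s t, s ∈ Icc 0 (L n) → t ∈ Icc 0 (L n) → dist (g n s) (g n t) = |s - t|)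
    (ha : ∀ t, 0 ≤ t → Tendsto (fun n => g n t) atTop (𝓝 (a t))) {s t : ℝ} (hs : 0 ≤ s)
    (ht : 0 ≤ t) : dist (a s) (a t) = |s - t| := by
  refine tendsto_nhds_unique ((ha s hs).dist (ha t ht)) (tendsto_const_nhds.congr' ?_)
  filter_upwards [hL.eventually_ge_atTop (max s t)] with n hn
  exact (hg n s t ⟨hs, (le_max_left s t).trans hn⟩ ⟨ht, (le_max_right s t).trans hn⟩).symm

end GeodesicSegments

theorem arzela_ascoli_limit_ray_general
    {X : Type*} [MetricSpace X] [ProperSpace X]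
    (o : X) (κ : ℝ → ℝ) (m : ℝ)
    (α : ℝ → X) (g : ℕ → ℝ → X)
    (hg0 : ∀ i : ℕ, g i 0 = o)
    (hgiso : ∀ i : ℕ, ∀ s t : ℝ,
      s ∈ Set.Icc 0 (dist o (α i)) → t ∈ Set.Icc 0 (dist o (α i)) →
      dist (g i s) (g i t) = |s - t|)
    (hlen : Tendsto (fun i : ℕ => dist o (α i)) atTop atTop)
    (hN : ∀ r > (0:ℝ), ∃ N : ℕ, ∀ i : ℕ, N ≤ i →
      ∀ t ∈ Set.Icc 0 (dist o (α i)), t ≤ r →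
        infDist (g i t) (α '' Set.Ici 0) ≤ m * κ (dist (g i t) o)) :
    ∃ a : ℝ → X, a 0 = o ∧
      (∀ s t : ℝ, 0 ≤ s → 0 ≤ t → dist (a s) (a t) = |s - t|) ∧
      (∃ φ : ℕ → ℕ, StrictMono φ ∧
        TendstoLocallyUniformlyOn (fun n => g (φ n)) a atTop (Set.Ici 0)) ∧
      (∀ t : ℝ, 0 ≤ t →
        infDist (a t) (α '' Set.Ici 0) ≤ m * κ (dist (a t) o)) := by
  obtain ⟨a, φ, hφ, ha⟩ :=
    exists_subseq_tendstoLocallyUniformlyOn_Ici hg0 (fun _ => dist_nonneg) hgiso hlen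
  have hlenφ := hlen.comp hφ.tendsto_atTop
  have hpt : ∀ t, 0 ≤ t → Tendsto (fun n => g (φ n) t) atTop (𝓝 (a t)) :=
    fun t ht => ha.tendsto_at ht
  have hdist : ∀ s t, 0 ≤ s → 0 ≤ t → dist (a s) (a t) = |s - t| :=
    fun s t hs ht => dist_eq_abs_sub_of_tendsto hlenφ (fun n => hgiso (φ n)) hpt hs ht
  have ha0 : a 0 = o := tendsto_nhds_unique (hpt 0 le_rfl) (by simp only [hg0, tendsto_const_nhds])
  refine ⟨a, ha0, hdist, ⟨φ, hφ, ha⟩, fun t ht => ?_⟩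
  obtain ⟨N, hN⟩ := hN (t + 1) (by linarith)
  rw [← ha0, hdist t 0 ht le_rfl, sub_zero, abs_of_nonneg ht]
  refine le_of_tendsto ((continuous_infDist_pt _).continuousAt.tendsto.comp (hpt t ht)) ?_
  filter_upwards [hlenφ.eventually_ge_atTop t, hφ.tendsto_atTop.eventually_ge_atTop N]
    with n htn hNn
  have hgt : dist (g (φ n) t) o = t := by
    rw [← hg0 (φ n), hgiso _ t 0 ⟨ht, htn⟩ ⟨le_rfl, dist_nonneg⟩, sub_zero, abs_of_nonneg ht]
  simpa only [hgt, Function.comp_apply] using hN (φ n) hNn t ⟨ht, htn⟩ (by linarith)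

/-- Arzelà–Ascoli limit of geodesic segments: if the geodesic segments
`g i` from `𝔬` to `α(i)` have lengths tending to infinity and eventually lie,
within each ball, in the neighborhood `N_κ(α, m)`, then a subsequence converges
locally uniformly to a geodesic ray `a` from `𝔬` with `a ⊆ N_κ(α, m)`. -/
theorem arzela_ascoli_limit_ray
    {X : Type*} [MetricSpace X] [ProperSpace X]
    (o : X) (κ : ℝ → ℝ) (hκm : Monotone κ) (m : ℝ) (hm : 0 ≤ m)
    (α : ℝ → X) (g : ℕ → ℝ → X)
    (hg0 : ∀ i : ℕ, g i 0 = o)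
    (hgend : ∀ i : ℕ, g i (dist o (α i)) = α i)
    (hgiso : ∀ i : ℕ, ∀ s t : ℝ,
      s ∈ Set.Icc 0 (dist o (α i)) → t ∈ Set.Icc 0 (dist o (α i)) →
      dist (g i s) (g i t) = |s - t|)
    (hlen : Tendsto (fun i : ℕ => dist o (α i)) atTop atTop)
    (hN : ∀ r > (0:ℝ), ∃ N : ℕ, ∀ i : ℕ, N ≤ i →
      ∀ t ∈ Set.Icc 0 (dist o (α i)), t ≤ r →
        infDist (g i t) (α '' Set.Ici 0) ≤ m * κ (dist (g i t) o)) :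
    ∃ a : ℝ → X, a 0 = o ∧
      (∀ s t : ℝ, 0 ≤ s → 0 ≤ t → dist (a s) (a t) = |s - t|) ∧
      (∃ φ : ℕ → ℕ, StrictMono φ ∧
        TendstoLocallyUniformlyOn (fun n => g (φ n)) a atTop (Set.Ici 0)) ∧
      (∀ t : ℝ, 0 ≤ t →
        infDist (a t) (α '' Set.Ici 0) ≤ m * κ (dist (a t) o)) :=
  arzela_ascoli_limit_ray_general o κ m α g hg0 hgiso hlen hN
end
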